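/- arXiv:2209.07868 — 8 statements merged into one kernel-verified Lean document; each statement's English description precedes it below -/
import Mathlib

section
/- Let Q1 and Q2 be probability measures on the real line. Suppose there exist a σ-finite measure μ on ℝ and densities g1 = dQ1/dμ, g2 = dQ2/dμ such that g1(y)·g2(x) ≤ g1(x)·g2(y) whenever x < y. Then for arbitrary Borel sets A, B ⊆ ℝ with A < B element-wise, Q1(B)·Q2(A) ≤ Q1(A)·Q2(B). -/
open MeasureTheory Set Filter

noncomputable section

/-- `g` is a (measurable, nonnegative) density of `Q` with respect to `μ`,
i.e. `Q B = ∫_B g dμ` for all Borel sets `B`. -/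
def IsDensity (Q μ : Measure ℝ) (g : ℝ → ENNReal) : Prop :=
  Measurable g ∧ ∀ B : Set ℝ, MeasurableSet B → Q B = ∫⁻ x in B, g x ∂μ

/-- Likelihood ratio order `Q1 ≤_lr Q2`: there exist a σ-finite measure `μ` and densities
`g1 = dQ1/dμ`, `g2 = dQ2/dμ` such that the ratio `g2/g1` (with values in `[0,∞]`)
is nondecreasing on the set `{g1 + g2 > 0}`. -/
def LikelihoodRatioLE (Q1 Q2 : Measure ℝ) : Prop :=
  ∃ (μ : Measure ℝ) (g1 g2 : ℝ → ENNReal), SigmaFinite μ ∧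
    IsDensity Q1 μ g1 ∧ IsDensity Q2 μ g2 ∧
    ∀ x y : ℝ, x ≤ y → 0 < g1 x + g2 x → 0 < g1 y + g2 y →
      g2 x / g1 x ≤ g2 y / g1 y

theorem stmt_1 (Q1 Q2 : Measure ℝ) [IsProbabilityMeasure Q1] [IsProbabilityMeasure Q2]
    (μ : Measure ℝ) [SigmaFinite μ] (g1 g2 : ℝ → ENNReal)
    (h1 : IsDensity Q1 μ g1) (h2 : IsDensity Q2 μ g2)
    (hratio : ∀ x y : ℝ, x < y → g1 y * g2 x ≤ g1 x * g2 y)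
    (A B : Set ℝ) (hA : MeasurableSet A) (hB : MeasurableSet B)
    (hAB : ∀ a ∈ A, ∀ b ∈ B, a < b) :
    Q1 B * Q2 A ≤ Q1 A * Q2 B := by
  rw [h1.2 B hB, h2.2 A hA, h1.2 A hA, h2.2 B hB]
  calc (∫⁻ y in B, g1 y ∂μ) * ∫⁻ x in A, g2 x ∂μ
      = ∫⁻ x in A, (∫⁻ y in B, g1 y ∂μ) * g2 x ∂μ :=
        (lintegral_const_mul _ h2.1).symm
    _ ≤ ∫⁻ x in A, g1 x * ∫⁻ y in B, g2 y ∂μ ∂μ := by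
        apply setLIntegral_mono (h1.1.mul_const _)
        intro x hx
        calc (∫⁻ y in B, g1 y ∂μ) * g2 x = ∫⁻ y in B, g1 y * g2 x ∂μ := by
              rw [lintegral_mul_const _ h1.1]
          _ ≤ ∫⁻ y in B, g1 x * g2 y ∂μ := by
              apply setLIntegral_mono (h2.1.const_mul _)
              intro y hy
              exact hratio x y (hAB x hx y hy)
          _ = g1 x * ∫⁻ y in B, g2 y ∂μ := lintegral_const_mul _ h2.1
    _ = (∫⁻ x in A, g1 x ∂μ) * ∫⁻ y in B, g2 y ∂μ := lintegral_mul_const _ h1.1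
end
end

section
/- Let Q1 and Q2 be probability measures on the real line. Suppose there exists a dense subset D of ℝ such that for all intervals A = (x,y] and B = (y,z] with endpoints x < y < z in D, one has Q1(B)·Q2(A) ≤ Q1(A)·Q2(B). Then there exist a σ-finite measure μ on ℝ and densities g1 = dQ1/dμ, g2 = dQ2/dμ such that g2/g1 is nondecreasing on the set {g1 + g2 > 0}; that is, Q1 ≤_lr Q2. -/
open MeasureTheory Set Filter

noncomputable section

/-! Put `μ = Q1 + Q2`. The hypothesis says that the ratio `Q2 / μ` of an interval is at most that
of the adjacent interval to its right. Chaining through the middle interval (trivially when it is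
`μ`-null) extends this to any two disjoint intervals with endpoints in `D`, and right-continuity of
distribution functions, together with their left limits, extends it to disjoint closed intervals.
By Besicovitch's differentiation theorem `dQ2/dμ` is, `μ`-a.e., the limit of `Q2 / μ` on shrinking
closed balls, hence monotone on a `μ`-conull set, so it agrees `μ`-a.e. with a monotone `g`.
Then `1 - g` and `g` are densities of `Q1` and `Q2` whose ratio is nondecreasing. -/

open Topology ENNReal ProbabilityTheory

namespace ENNReal

theorem mul_le_mul_of_cross_trans {a₁ b₁ a₂ b₂ a₃ b₃ : ℝ≥0∞} (h₁₂ : a₁ * b₂ ≤ b₁ * a₂)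
    (h₂₃ : a₂ * b₃ ≤ b₂ * a₃) (hb₂ : b₂ ≠ 0) (hb₂' : b₂ ≠ ∞) : a₁ * b₃ ≤ b₁ * a₃ := by
  rw [← ENNReal.mul_le_mul_iff_left hb₂ hb₂']
  calc a₁ * b₃ * b₂ = a₁ * b₂ * b₃ := by ring
    _ ≤ b₁ * a₂ * b₃ := by gcongr
    _ = b₁ * (a₂ * b₃) := by ring
    _ ≤ b₁ * (b₂ * a₃) := by gcongr
    _ = b₁ * a₃ * b₂ := by ring

theorem div_le_div_of_mul_le_mul {a₁ b₁ a₂ b₂ : ℝ≥0∞} (h : a₁ * b₂ ≤ b₁ * a₂)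
    (hb₁ : b₁ ≠ 0) (hb₁' : b₁ ≠ ∞) (hb₂ : b₂ ≠ 0) (hb₂' : b₂ ≠ ∞) : a₁ / b₁ ≤ a₂ / b₂ := by
  rw [ENNReal.div_le_iff_le_mul (.inl hb₁) (.inl hb₁'), mul_comm (a₂ / b₂), ← mul_div_assoc,
    ENNReal.le_div_iff_mul_le (.inl hb₂) (.inl hb₂')]
  exact h

theorem mul_add_le_add_mul {a₁ b₁ a₂ b₂ : ℝ≥0∞} (h : b₁ * a₂ ≤ a₁ * b₂) :
    a₂ * (b₁ + b₂) ≤ (a₁ + a₂) * b₂ := by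
  rw [mul_add, add_mul, mul_comm a₂ b₁]
  gcongr

end ENNReal

theorem Dense.nhdsWithin_inter_neBot {X : Type*} [TopologicalSpace X] {D U : Set X}
    (hD : Dense D) (hU : IsOpen U) {x : X} (hx : x ∈ closure U) : (𝓝[D ∩ U] x).NeBot := by
  rw [← mem_closure_iff_nhdsWithin_neBot, inter_comm]
  exact closure_minimal (hD.open_subset_closure_inter hU) isClosed_closure hx

theorem MeasureTheory.measure_Ioc_mul_le_of_adjacent {α : Type*} [LinearOrder α]
    [TopologicalSpace α] [OrderClosedTopology α] [CompactIccSpace α] [MeasurableSpace α]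
    [OpensMeasurableSpace α] {ν μ : Measure α} [IsLocallyFiniteMeasure μ] (hνμ : ν ≪ μ)
    {D : Set α} (h : ∀ x ∈ D, ∀ y ∈ D, ∀ z ∈ D, x < y → y < z →
      ν (Ioc x y) * μ (Ioc y z) ≤ μ (Ioc x y) * ν (Ioc y z))
    {a b c d : α} (ha : a ∈ D) (hb : b ∈ D) (hc : c ∈ D) (hd : d ∈ D)
    (hab : a < b) (hbc : b < c) (hcd : c < d) :
    ν (Ioc a b) * μ (Ioc c d) ≤ μ (Ioc a b) * ν (Ioc c d) := by
  by_cases hμ₀ : μ (Ioc b c) = 0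
  · have hsplit : ∀ ρ : Measure α, ρ (Ioc b c) = 0 → ρ (Ioc b d) = ρ (Ioc c d) := fun ρ hρ => by
      rw [← Ioc_union_Ioc_eq_Ioc hbc.le hcd.le,
        measure_union (Ioc_disjoint_Ioc_of_le le_rfl) measurableSet_Ioc, hρ, zero_add]
    rw [← hsplit μ hμ₀, ← hsplit ν (hνμ hμ₀)]
    exact h a ha b hb d hd hab (hbc.trans hcd)
  · exact ENNReal.mul_le_mul_of_cross_trans (h a ha b hb c hc hab hbc) (h b hb c hc d hd hbc hcd)
      hμ₀ measure_Ioc_lt_top.ne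

namespace StieltjesFunction

theorem tendsto_measure_Ioc_nhdsLT_prod_nhdsGT (f : StieltjesFunction ℝ) (p q : ℝ) :
    Tendsto (fun x : ℝ × ℝ => f.measure (Ioc x.1 x.2)) (𝓝[<] p ×ˢ 𝓝[>] q)
      (𝓝 (f.measure (Icc p q))) := by
  simp only [measure_Ioc, measure_Icc]
  refine ENNReal.tendsto_ofReal (Tendsto.sub ?_ ?_)
  · exact ((f.right_continuous q).mono_left (nhdsWithin_mono q Ioi_subset_Ici_self)).comp
      tendsto_snd
  · exact (f.mono.tendsto_leftLim p).comp tendsto_fst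

theorem measure_Icc_mul_le_of_dense (f g : StieltjesFunction ℝ) {D : Set ℝ} (hD : Dense D)
    (h : ∀ a ∈ D, ∀ b ∈ D, ∀ c ∈ D, ∀ d ∈ D, a < b → b < c → c < d →
      f.measure (Ioc a b) * g.measure (Ioc c d) ≤ g.measure (Ioc a b) * f.measure (Ioc c d))
    {p q s t : ℝ} (hpq : p ≤ q) (hqs : q < s) (hst : s ≤ t) :
    f.measure (Icc p q) * g.measure (Icc s t) ≤ g.measure (Icc p q) * f.measure (Icc s t) := by
  obtain ⟨m, hqm, hms⟩ := exists_between hqs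
  let L₁ := 𝓝[D ∩ Iio p] p ×ˢ 𝓝[D ∩ Ioi q] q
  let L₂ := 𝓝[D ∩ Iio s] s ×ˢ 𝓝[D ∩ Ioi t] t
  have hleft : ∀ u : ℝ, (𝓝[D ∩ Iio u] u).NeBot := fun u =>
    hD.nhdsWithin_inter_neBot isOpen_Iio (by simp)
  have hright : ∀ u : ℝ, (𝓝[D ∩ Ioi u] u).NeBot := fun u =>
    hD.nhdsWithin_inter_neBot isOpen_Ioi (by simp)
  have : L₁.NeBot := prod_neBot.2 ⟨hleft p, hright q⟩
  have : L₂.NeBot := prod_neBot.2 ⟨hleft s, hright t⟩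
  have hlim : ∀ (φ : StieltjesFunction ℝ) {u v : ℝ},
      Tendsto (fun x : ℝ × ℝ => φ.measure (Ioc x.1 x.2)) (𝓝[D ∩ Iio u] u ×ˢ 𝓝[D ∩ Ioi v] v)
        (𝓝 (φ.measure (Icc u v))) := fun φ {u v} =>
    (φ.tendsto_measure_Ioc_nhdsLT_prod_nhdsGT u v).mono_left
      (prod_mono (nhdsWithin_mono u inter_subset_right) (nhdsWithin_mono v inter_subset_right))
  have hord : ∀ᶠ x in L₁ ×ˢ L₂, ((x.1.1 ∈ D ∧ x.1.1 < p) ∧ (x.1.2 ∈ D ∧ q < x.1.2) ∧ x.1.2 < m) ∧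
      ((x.2.1 ∈ D ∧ x.2.1 < s) ∧ m < x.2.1) ∧ (x.2.2 ∈ D ∧ t < x.2.2) :=
    (Eventually.prod_mk self_mem_nhdsWithin (inter_mem self_mem_nhdsWithin
      (mem_nhdsWithin_of_mem_nhds (Iio_mem_nhds hqm)))).prod_mk
    (Eventually.prod_mk (inter_mem self_mem_nhdsWithin
      (mem_nhdsWithin_of_mem_nhds (Ioi_mem_nhds hms))) self_mem_nhdsWithin)
  refine le_of_tendsto_of_tendsto
    (ENNReal.Tendsto.mul ((hlim f).comp tendsto_fst) (.inr measure_Icc_lt_top.ne)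
      ((hlim g).comp tendsto_snd) (.inr measure_Icc_lt_top.ne))
    (ENNReal.Tendsto.mul ((hlim g).comp tendsto_fst) (.inr measure_Icc_lt_top.ne)
      ((hlim f).comp tendsto_snd) (.inr measure_Icc_lt_top.ne)) ?_
  filter_upwards [hord] with x ⟨⟨⟨ha, hap⟩, ⟨hb, hqb⟩, hbm⟩, ⟨⟨hc, hcs⟩, hmc⟩, ⟨hd, htd⟩⟩
  exact h _ ha _ hb _ hc _ hd (by linarith) (hbm.trans hmc) (by linarith)

end StieltjesFunction

namespace MeasureTheory.Measure

theorem rnDeriv_le_rnDeriv_of_measure_Icc_mul_le {ν μ : Measure ℝ} [IsLocallyFiniteMeasure μ]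
    (h : ∀ p q s t : ℝ, p ≤ q → q < s → s ≤ t →
      ν (Icc p q) * μ (Icc s t) ≤ μ (Icc p q) * ν (Icc s t))
    {x y : ℝ} (hx : x ∈ μ.support) (hy : y ∈ μ.support)
    (hνx : Tendsto (fun r => ν (Metric.closedBall x r) / μ (Metric.closedBall x r)) (𝓝[>] 0)
      (𝓝 (ν.rnDeriv μ x)))
    (hνy : Tendsto (fun r => ν (Metric.closedBall y r) / μ (Metric.closedBall y r)) (𝓝[>] 0)
      (𝓝 (ν.rnDeriv μ y)))
    (hxy : x < y) : ν.rnDeriv μ x ≤ ν.rnDeriv μ y := by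
  refine le_of_tendsto_of_tendsto hνx hνy ?_
  have hpos : ∀ z ∈ μ.support, ∀ r : ℝ, 0 < r → μ (Icc (z - r) (z + r)) ≠ 0 := fun z hz r hr => by
    rw [← Real.closedBall_eq_Icc]
    exact ((mem_support_iff_forall z).1 hz _ (Metric.closedBall_mem_nhds z hr)).ne'
  filter_upwards [Ioo_mem_nhdsGT (half_pos (sub_pos.2 hxy))] with r ⟨hr, hrxy⟩
  simp only [Real.closedBall_eq_Icc]
  exact ENNReal.div_le_div_of_mul_le_mul (h _ _ _ _ (by linarith) (by linarith) (by linarith))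
    (hpos x hx r hr) measure_Icc_lt_top.ne (hpos y hy r hr) measure_Icc_lt_top.ne

theorem exists_monotone_ae_eq_rnDeriv_of_measure_Icc_mul_le (ν μ : Measure ℝ)
    [IsLocallyFiniteMeasure ν] [IsLocallyFiniteMeasure μ]
    (h : ∀ p q s t : ℝ, p ≤ q → q < s → s ≤ t →
      ν (Icc p q) * μ (Icc s t) ≤ μ (Icc p q) * ν (Icc s t)) :
    ∃ g : ℝ → ℝ≥0∞, Monotone g ∧ ν.rnDeriv μ =ᵐ[μ] g := by
  set T := {x | x ∈ μ.support ∧ Tendsto (fun r => ν (Metric.closedBall x r) /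
    μ (Metric.closedBall x r)) (𝓝[>] 0) (𝓝 (ν.rnDeriv μ x))}
  have hT : ∀ᵐ x ∂μ, x ∈ T := Eventually.and support_mem_ae (Besicovitch.ae_tendsto_rnDeriv ν μ)
  have hmono : MonotoneOn (ν.rnDeriv μ) T := fun x hx y hy hxy => by
    rcases hxy.eq_or_lt with rfl | hxy
    · rfl
    · exact rnDeriv_le_rnDeriv_of_measure_Icc_mul_le h hx.1 hy.1 hx.2 hy.2 hxy
  obtain ⟨g, hg, hfg⟩ := hmono.exists_monotone_extension (OrderBot.bddBelow _) (OrderTop.bddAbove _)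
  exact ⟨g, hg, hT.mono fun x hx => hfg hx⟩

theorem rnDeriv_add_left_ae_eq_one_sub {α : Type*} [MeasurableSpace α] (ν₁ ν₂ : Measure α)
    [SigmaFinite ν₁] [SigmaFinite ν₂] :
    ν₁.rnDeriv (ν₁ + ν₂) =ᵐ[ν₁ + ν₂] fun x => 1 - ν₂.rnDeriv (ν₁ + ν₂) x := by
  filter_upwards [ν₁.rnDeriv_add' ν₂ (ν₁ + ν₂), (ν₁ + ν₂).rnDeriv_self,
    ν₂.rnDeriv_lt_top (ν₁ + ν₂)] with x hadd hself hlt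
  rw [hself, Pi.add_apply] at hadd
  exact ENNReal.eq_sub_of_add_eq hlt.ne hadd.symm

end MeasureTheory.Measure

theorem IsDensity.of_rnDeriv_ae_eq {Q μ : Measure ℝ} [Q.HaveLebesgueDecomposition μ] [SFinite μ]
    (hQμ : Q ≪ μ) {g : ℝ → ℝ≥0∞} (hg : Measurable g) (hQg : Q.rnDeriv μ =ᵐ[μ] g) :
    IsDensity Q μ g :=
  ⟨hg, fun B _ => by
    rw [← Measure.setLIntegral_rnDeriv hQμ B]
    exact lintegral_congr_ae (ae_restrict_of_ae hQg)⟩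

theorem stmt_2 (Q1 Q2 : Measure ℝ) [IsProbabilityMeasure Q1] [IsProbabilityMeasure Q2]
    (D : Set ℝ) (hD : Dense D)
    (h : ∀ x y z : ℝ, x ∈ D → y ∈ D → z ∈ D → x < y → y < z →
      Q1 (Ioc y z) * Q2 (Ioc x y) ≤ Q1 (Ioc x y) * Q2 (Ioc y z)) :
    LikelihoodRatioLE Q1 Q2 := by
  set μ := Q1 + Q2
  have hQ2μ : Q2 ≪ μ := Measure.AbsolutelyContinuous.rfl.add_right' Q1
  have hμ : (cdf Q1 + cdf Q2).measure = μ := by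
    rw [StieltjesFunction.measure_add, measure_cdf, measure_cdf]
  have hadj : ∀ x ∈ D, ∀ y ∈ D, ∀ z ∈ D, x < y → y < z →
      Q2 (Ioc x y) * μ (Ioc y z) ≤ μ (Ioc x y) * Q2 (Ioc y z) :=
    fun x hx y hy z hz hxy hyz => ENNReal.mul_add_le_add_mul (h x y z hx hy hz hxy hyz)
  have hIoc : ∀ a ∈ D, ∀ b ∈ D, ∀ c ∈ D, ∀ d ∈ D, a < b → b < c → c < d →
      Q2 (Ioc a b) * μ (Ioc c d) ≤ μ (Ioc a b) * Q2 (Ioc c d) :=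
    fun a ha b hb c hc d hd => measure_Ioc_mul_le_of_adjacent hQ2μ hadj ha hb hc hd
  have hIcc : ∀ p q s t : ℝ, p ≤ q → q < s → s ≤ t →
      Q2 (Icc p q) * μ (Icc s t) ≤ μ (Icc p q) * Q2 (Icc s t) := fun p q s t hpq hqs hst => by
    rw [← measure_cdf Q2, ← hμ] at hIoc ⊢
    exact (cdf Q2).measure_Icc_mul_le_of_dense (cdf Q1 + cdf Q2) hD hIoc hpq hqs hst
  obtain ⟨g, hg, hQ2g⟩ := Measure.exists_monotone_ae_eq_rnDeriv_of_measure_Icc_mul_le Q2 μ hIcc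
  refine ⟨μ, fun x => 1 - g x, g, inferInstance, ?_,
    IsDensity.of_rnDeriv_ae_eq hQ2μ hg.measurable hQ2g,
    fun x y hxy _ _ => ENNReal.div_le_div (hg hxy) (tsub_le_tsub_left (hg hxy) 1)⟩
  refine IsDensity.of_rnDeriv_ae_eq (Measure.AbsolutelyContinuous.rfl.add_right Q2)
    (measurable_const.sub hg.measurable) ?_
  filter_upwards [Measure.rnDeriv_add_left_ae_eq_one_sub Q1 Q2, hQ2g] with x h1 h2
  rw [h1, h2]
end
end

section
/- Let Q1 and Q2 be probability measures on the real line. Then Q1 ≤_lr Q2 if and only if there exists a nondecreasing measurable function ρ : ℝ → [0,1] which is a density of Q2 with respect to the finite measure Q1 + Q2. -/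
open MeasureTheory Set Filter

noncomputable section

/-!
Given densities `g1, g2` with a nondecreasing ratio, `ρ = g2 / (g1 + g2)` is a density of `Q2`
with respect to `Q1 + Q2` with values in `[0, 1]`; it is nondecreasing because
`t ↦ t / (1 + t)` is, and off the (null) set where `g1` or `g2` is infinite or both vanish it is
extended to a monotone function on all of `ℝ`. Conversely, if `ρ` is such a density then `1 - ρ`
is a density of `Q1` with respect to `Q1 + Q2`, and `ρ / (1 - ρ)` is nondecreasing.
-/

open scoped ENNReal

namespace ENNReal

theorem div_le_div_of_mul_le_mul_s3 {a b c d : ℝ≥0∞} (hb : b ≠ 0) (hb' : b ≠ ∞) (hd : d ≠ 0)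
    (hd' : d ≠ ∞) (h : a * d ≤ c * b) : a / b ≤ c / d := by
  rwa [ENNReal.le_div_iff_mul_le (Or.inl hd) (Or.inl hd'), div_eq_mul_inv, mul_right_comm,
    ← div_eq_mul_inv, ENNReal.div_le_iff hb hb']

theorem div_add_le_div_add_of_div_le_div {a b c d : ℝ≥0∞} (ha : a ≠ ∞) (hb : b ≠ ∞)
    (hc : c ≠ ∞) (hd : d ≠ ∞) (hab : a + b ≠ 0) (hcd : c + d ≠ 0) (h : b / a ≤ d / c) :
    b / (a + b) ≤ d / (c + d) := by
  rcases eq_or_ne c 0 with rfl | hc0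
  · rw [zero_add, ENNReal.div_self (by simpa using hcd) hd]
    exact div_le_of_le_mul (by rw [one_mul]; exact le_add_self)
  rcases eq_or_ne a 0 with rfl | ha0
  · rw [ENNReal.div_zero (by simpa using hab), top_le_iff, ENNReal.div_eq_top] at h
    tauto
  have hbc : b * c ≤ d * a := by
    rwa [ENNReal.le_div_iff_mul_le (Or.inl hc0) (Or.inl hc), div_eq_mul_inv, mul_right_comm,
      ← div_eq_mul_inv, ENNReal.div_le_iff ha0 ha] at h
  refine div_le_div_of_mul_le_mul_s3 hab (add_ne_top.mpr ⟨ha, hb⟩) hcd (add_ne_top.mpr ⟨hc, hd⟩) ?_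
  calc b * (c + d) = b * c + b * d := mul_add _ _ _
    _ ≤ d * a + d * b := add_le_add hbc (mul_comm b d).le
    _ = d * (a + b) := (mul_add _ _ _).symm

end ENNReal

namespace IsDensity

variable {Q Q' μ ν : Measure ℝ} {f g : ℝ → ℝ≥0∞}

theorem withDensity_eq (h : IsDensity Q μ g) : μ.withDensity g = Q :=
  Measure.ext fun B hB => by rw [withDensity_apply _ hB, h.2 B hB]

theorem ae_lt_top [IsFiniteMeasure Q] (h : IsDensity Q μ g) : ∀ᵐ x ∂μ, g x < ∞ :=
  MeasureTheory.ae_lt_top h.1 <| by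
    rw [← setLIntegral_univ, ← h.2 univ MeasurableSet.univ]; exact measure_ne_top _ _

theorem add (h : IsDensity Q μ f) (h' : IsDensity Q' μ g) : IsDensity (Q + Q') μ (f + g) :=
  ⟨h.1.add h'.1, fun B hB => by
    rw [Measure.add_apply, h.2 B hB, h'.2 B hB, ← lintegral_add_left h.1, Pi.add_def]⟩

theorem of_mul_ae_eq {ρ : ℝ → ℝ≥0∞} (hν : IsDensity ν μ f) (hQ : IsDensity Q μ g)
    (hρ : Measurable ρ) (h : f * ρ =ᵐ[μ] g) : IsDensity Q ν ρ :=
  ⟨hρ, fun B hB => by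
    rw [hQ.2 B hB, ← hν.withDensity_eq, setLIntegral_withDensity_eq_setLIntegral_mul μ hν.1 hρ hB]
    exact lintegral_congr_ae (ae_restrict_of_ae (h.mono fun x hx => hx.symm))⟩

theorem one_sub_of_add [IsFiniteMeasure Q'] {ρ : ℝ → ℝ≥0∞} (h : IsDensity Q' (Q + Q') ρ)
    (hρ : ∀ x, ρ x ≤ 1) : IsDensity Q (Q + Q') (fun x => 1 - ρ x) :=
  ⟨measurable_const.sub h.1, fun B hB => by
    have hfin : ∫⁻ x in B, ρ x ∂(Q + Q') ≠ ∞ := by rw [← h.2 B hB]; exact measure_ne_top _ _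
    rw [lintegral_sub h.1 hfin (ae_of_all _ hρ), setLIntegral_one, ← h.2 B hB, Measure.add_apply,
      ENNReal.add_sub_cancel_right (measure_ne_top _ _)]⟩

end IsDensity

variable {Q1 Q2 : Measure ℝ}

theorem LikelihoodRatioLE.exists_monotone_density [IsFiniteMeasure Q1] [IsFiniteMeasure Q2]
    (h : LikelihoodRatioLE Q1 Q2) :
    ∃ ρ : ℝ → ℝ≥0∞, Monotone ρ ∧ (∀ x, ρ x ≤ 1) ∧ IsDensity Q2 (Q1 + Q2) ρ := by
  obtain ⟨μ, g1, g2, -, hg1, hg2, hratio⟩ := h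
  set S : Set ℝ := {x | g1 x ≠ ∞ ∧ g2 x ≠ ∞ ∧ g1 x + g2 x ≠ 0}
  have hle_one : ∀ x, g2 x / (g1 x + g2 x) ≤ 1 := fun x =>
    ENNReal.div_le_of_le_mul (by rw [one_mul]; exact le_add_self)
  have hmonoOn : MonotoneOn (fun x => g2 x / (g1 x + g2 x)) S := fun x hx y hy hxy =>
    ENNReal.div_add_le_div_add_of_div_le_div hx.1 hx.2.1 hy.1 hy.2.1 hx.2.2 hy.2.2
      (hratio x y hxy (pos_iff_ne_zero.mpr hx.2.2) (pos_iff_ne_zero.mpr hy.2.2))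
  obtain ⟨ρ, hρ_mono, hρ_eq⟩ := hmonoOn.exists_monotone_extension (OrderBot.bddBelow _)
    (OrderTop.bddAbove _)
  have hmono : Monotone fun x => min (ρ x) 1 := fun x y hxy => min_le_min_right 1 (hρ_mono hxy)
  refine ⟨fun x => min (ρ x) 1, hmono, fun x => min_le_right _ _,
    (hg1.add hg2).of_mul_ae_eq hg2 hmono.measurable ?_⟩
  filter_upwards [hg1.ae_lt_top, hg2.ae_lt_top] with x h1 h2
  by_cases h0 : g1 x + g2 x = 0
  · simp [add_eq_zero.mp h0]
  have hx : min (ρ x) 1 = g2 x / (g1 x + g2 x) := by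
    rw [← hρ_eq ⟨h1.ne, h2.ne, h0⟩, min_eq_left (hle_one x)]
  rw [Pi.mul_apply, hx, Pi.add_apply, ENNReal.mul_div_cancel' (absurd · h0)
    (absurd · (ENNReal.add_ne_top.mpr ⟨h1.ne, h2.ne⟩))]

theorem likelihoodRatioLE_of_monotone_density [IsFiniteMeasure Q1] [IsFiniteMeasure Q2]
    {ρ : ℝ → ℝ≥0∞} (hmono : Monotone ρ) (hle : ∀ x, ρ x ≤ 1) (hρ : IsDensity Q2 (Q1 + Q2) ρ) :
    LikelihoodRatioLE Q1 Q2 :=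
  ⟨Q1 + Q2, fun x => 1 - ρ x, ρ, inferInstance, hρ.one_sub_of_add hle, hρ,
    fun _ _ hxy _ _ => ENNReal.div_le_div (hmono hxy) (tsub_le_tsub_left (hmono hxy) 1)⟩

theorem stmt_3 (Q1 Q2 : Measure ℝ) [IsProbabilityMeasure Q1] [IsProbabilityMeasure Q2] :
    LikelihoodRatioLE Q1 Q2 ↔
    ∃ ρ : ℝ → ENNReal, Monotone ρ ∧ Measurable ρ ∧ (∀ x, ρ x ≤ 1) ∧
      ∀ B : Set ℝ, MeasurableSet B → Q2 B = ∫⁻ x in B, ρ x ∂(Q1 + Q2) := by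
  constructor
  · intro h
    obtain ⟨ρ, hmono, hle, hmeas, hdens⟩ := h.exists_monotone_density
    exact ⟨ρ, hmono, hmeas, hle, hdens⟩
  · rintro ⟨ρ, hmono, hmeas, hle, hdens⟩
    exact likelihoodRatioLE_of_monotone_density hmono hle ⟨hmeas, hdens⟩
end
end

section
/- Let (Q_{n,1})_{n≥1} and (Q_{n,2})_{n≥1} be sequences of probability measures on the real line converging weakly to probability measures Q1 and Q2, respectively. If Q_{n,1} ≤_lr Q_{n,2} for all n, then Q1 ≤_lr Q2. -/
open MeasureTheory Set Filter
open scoped ENNReal Topology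

noncomputable section

lemma cross_of_ratio {p1 p2 q1 q2 : ℝ≥0∞} (hp1 : p1 ≠ ∞) (hp2 : p2 ≠ ∞)
    (hq1 : q1 ≠ ∞) (hq2 : q2 ≠ ∞)
    (h : 0 < p1 + p2 → 0 < q1 + q2 → p2 / p1 ≤ q2 / q1) :
    p2 * q1 ≤ p1 * q2 := by
  rcases eq_or_ne q1 0 with hq0 | hq0
  · simp [hq0]
  rcases eq_or_ne p2 0 with hp0 | hp0
  · simp [hp0]
  have hpp : 0 < p1 + p2 := by
    have : p2 > 0 := pos_iff_ne_zero.mpr hp0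
    exact lt_of_lt_of_le this le_add_self
  have hqq : 0 < q1 + q2 := by
    have : q1 > 0 := pos_iff_ne_zero.mpr hq0
    exact lt_of_lt_of_le this le_self_add
  have h' := h hpp hqq
  rcases eq_or_ne p1 0 with hp10 | hp10
  · have htop : p2 / p1 = ∞ := by
      rw [hp10, ENNReal.div_zero hp0]
    have htop2 : q2 / q1 = ∞ := top_le_iff.mp (htop ▸ h')
    rcases ENNReal.div_eq_top.mp htop2 with ⟨_, h0⟩ | ⟨ht, _⟩
    · exact absurd h0 hq0
    · exact absurd ht hq2
  · calc p2 * q1 = p2 / p1 * p1 * q1 := by rw [ENNReal.div_mul_cancel hp10 hp1]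
      _ ≤ q2 / q1 * p1 * q1 := by gcongr
      _ = q2 / q1 * q1 * p1 := by ring
      _ = q2 * p1 := by rw [ENNReal.div_mul_cancel hq0 hq1]
      _ = p1 * q2 := mul_comm _ _

lemma ratio_of_cross {p1 p2 q1 q2 : ℝ≥0∞} (hp : p1 + p2 = 1) (hq : q1 + q2 = 1)
    (h : p2 * q1 ≤ p1 * q2) : p2 / p1 ≤ q2 / q1 := by
  have hp1t : p1 ≠ ∞ := fun ht => by simp [ht] at hp
  have hq1t : q1 ≠ ∞ := fun ht => by simp [ht] at hq
  rcases eq_or_ne q1 0 with h0 | h0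
  · have hq2 : q2 = 1 := by simpa [h0] using hq
    rw [h0, hq2, ENNReal.div_zero one_ne_zero]
    exact le_top
  · rcases eq_or_ne p1 0 with hp0 | hp0
    · have hp2 : p2 = 1 := by simpa [hp0] using hp
      rw [hp0, hp2] at h
      simp at h
      exact absurd h h0
    · have h1 : p2 ≤ p1 * q2 / q1 :=
        (ENNReal.le_div_iff_mul_le (Or.inl h0) (Or.inl hq1t)).2 h
      calc p2 / p1 ≤ p1 * (q2 / q1) / p1 := by
            apply ENNReal.div_le_div_right
            rwa [mul_div_assoc] at h1
        _ = q2 / q1 := by rw [mul_comm, mul_div_assoc, ENNReal.div_self hp0 hp1t, mul_one]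

lemma tp2_of_lr {Q1 Q2 : Measure ℝ} [IsProbabilityMeasure Q1] [IsProbabilityMeasure Q2]
    (h : LikelihoodRatioLE Q1 Q2) {A B : Set ℝ}
    (hA : MeasurableSet A) (hB : MeasurableSet B)
    (hAB : ∀ a ∈ A, ∀ b ∈ B, a ≤ b) :
    Q1 B * Q2 A ≤ Q1 A * Q2 B := by
  obtain ⟨μ, g1, g2, hσ, ⟨hg1m, hg1⟩, ⟨hg2m, hg2⟩, hmono⟩ := h
  have hint1 : ∫⁻ x, g1 x ∂μ ≠ ∞ := by
    have := hg1 univ MeasurableSet.univ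
    rw [Measure.restrict_univ] at this
    rw [← this]
    simp [measure_ne_top]
  have hint2 : ∫⁻ x, g2 x ∂μ ≠ ∞ := by
    have := hg2 univ MeasurableSet.univ
    rw [Measure.restrict_univ] at this
    rw [← this]
    simp [measure_ne_top]
  have hfin : ∀ᵐ x ∂μ, g1 x ≠ ∞ ∧ g2 x ≠ ∞ := by
    filter_upwards [ae_lt_top hg1m hint1, ae_lt_top hg2m hint2] with x h1 h2
    exact ⟨h1.ne, h2.ne⟩
  -- pointwise cross inequality
  have key : ∀ x ∈ A, g1 x ≠ ∞ → g2 x ≠ ∞ → ∀ y ∈ B, g1 y ≠ ∞ → g2 y ≠ ∞ →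
      g1 y * g2 x ≤ g1 x * g2 y := by
    intro x hx hx1 hx2 y hy hy1 hy2
    rw [mul_comm (g1 y)]
    exact cross_of_ratio hx1 hx2 hy1 hy2 (fun h1 h2 => hmono x y (hAB x hx y hy) h1 h2)
  calc Q1 B * Q2 A = (∫⁻ y in B, g1 y ∂μ) * Q2 A := by rw [hg1 B hB]
    _ = ∫⁻ y in B, g1 y * Q2 A ∂μ := (lintegral_mul_const _ hg1m).symm
    _ ≤ ∫⁻ y in B, Q1 A * g2 y ∂μ := by
        apply lintegral_mono_ae
        filter_upwards [ae_restrict_mem hB, ae_restrict_of_ae hfin] with y hy ⟨hy1, hy2⟩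
        calc g1 y * Q2 A = g1 y * ∫⁻ x in A, g2 x ∂μ := by rw [hg2 A hA]
          _ = ∫⁻ x in A, g1 y * g2 x ∂μ := (lintegral_const_mul _ hg2m).symm
          _ ≤ ∫⁻ x in A, g1 x * g2 y ∂μ := by
              apply lintegral_mono_ae
              filter_upwards [ae_restrict_mem hA, ae_restrict_of_ae hfin] with x hx ⟨hx1, hx2⟩
              exact key x hx hx1 hx2 y hy hy1 hy2
          _ = (∫⁻ x in A, g1 x ∂μ) * g2 y := lintegral_mul_const _ hg1m
          _ = Q1 A * g2 y := by rw [hg1 A hA]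
    _ = Q1 A * ∫⁻ y in B, g2 y ∂μ := lintegral_const_mul _ hg2m
    _ = Q1 A * Q2 B := by rw [hg2 B hB]

lemma mixed_ineq (Q1seq Q2seq : ℕ → Measure ℝ) (Q1 Q2 : Measure ℝ)
    [∀ n, IsProbabilityMeasure (Q1seq n)] [∀ n, IsProbabilityMeasure (Q2seq n)]
    [IsProbabilityMeasure Q1] [IsProbabilityMeasure Q2]
    (hconv1 : ∀ f : BoundedContinuousFunction ℝ ℝ,
      Tendsto (fun n => ∫ x, f x ∂(Q1seq n)) atTop (nhds (∫ x, f x ∂Q1)))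
    (hconv2 : ∀ f : BoundedContinuousFunction ℝ ℝ,
      Tendsto (fun n => ∫ x, f x ∂(Q2seq n)) atTop (nhds (∫ x, f x ∂Q2)))
    (hlr : ∀ n, LikelihoodRatioLE (Q1seq n) (Q2seq n))
    {a b c d : ℝ} (hbc : b ≤ c) :
    Q1 (Ioo c d) * Q2 (Ioo a b) ≤ Q1 (Icc a b) * Q2 (Icc c d) := by
  set P1 : ℕ → ProbabilityMeasure ℝ := fun n => ⟨Q1seq n, inferInstance⟩
  set P2 : ℕ → ProbabilityMeasure ℝ := fun n => ⟨Q2seq n, inferInstance⟩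
  set P1l : ProbabilityMeasure ℝ := ⟨Q1, inferInstance⟩
  set P2l : ProbabilityMeasure ℝ := ⟨Q2, inferInstance⟩
  have htend1 : Tendsto P1 atTop (𝓝 P1l) := by
    rw [ProbabilityMeasure.tendsto_iff_forall_integral_tendsto]
    exact hconv1
  have htend2 : Tendsto P2 atTop (𝓝 P2l) := by
    rw [ProbabilityMeasure.tendsto_iff_forall_integral_tendsto]
    exact hconv2
  have hopen1 : Q1 (Ioo c d) ≤ atTop.liminf fun n => Q1seq n (Ioo c d) :=
    ProbabilityMeasure.le_liminf_measure_open_of_tendsto htend1 isOpen_Ioo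
  have hopen2 : Q2 (Ioo a b) ≤ atTop.liminf fun n => Q2seq n (Ioo a b) :=
    ProbabilityMeasure.le_liminf_measure_open_of_tendsto htend2 isOpen_Ioo
  have hclosed1 : (atTop.limsup fun n => Q1seq n (Icc a b)) ≤ Q1 (Icc a b) :=
    ProbabilityMeasure.limsup_measure_closed_le_of_tendsto htend1 isClosed_Icc
  have hclosed2 : (atTop.limsup fun n => Q2seq n (Icc c d)) ≤ Q2 (Icc c d) :=
    ProbabilityMeasure.limsup_measure_closed_le_of_tendsto htend2 isClosed_Icc
  have hlimsup_ne1 : (atTop.limsup fun n => Q1seq n (Icc a b)) ≠ ∞ :=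
    ne_top_of_le_ne_top ENNReal.one_ne_top (limsup_le_of_le (by isBoundedDefault)
      (Eventually.of_forall fun n => prob_le_one))
  have hlimsup_ne2 : (atTop.limsup fun n => Q2seq n (Icc c d)) ≠ ∞ :=
    ne_top_of_le_ne_top ENNReal.one_ne_top (limsup_le_of_le (by isBoundedDefault)
      (Eventually.of_forall fun n => prob_le_one))
  calc Q1 (Ioo c d) * Q2 (Ioo a b)
      ≤ (atTop.liminf fun n => Q1seq n (Ioo c d)) *
        (atTop.liminf fun n => Q2seq n (Ioo a b)) := mul_le_mul' hopen1 hopen2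
    _ ≤ atTop.liminf ((fun n => Q1seq n (Ioo c d)) * fun n => Q2seq n (Ioo a b)) :=
        ENNReal.le_liminf_mul
    _ ≤ atTop.limsup ((fun n => Q1seq n (Ioo c d)) * fun n => Q2seq n (Ioo a b)) :=
        liminf_le_limsup (by isBoundedDefault) (by isBoundedDefault)
    _ ≤ atTop.limsup ((fun n => Q1seq n (Icc a b)) * fun n => Q2seq n (Icc c d)) := by
        apply limsup_le_limsup ?_ (by isBoundedDefault) (by isBoundedDefault)
        apply Eventually.of_forall
        intro n
        simp only [Pi.mul_apply]
        calc Q1seq n (Ioo c d) * Q2seq n (Ioo a b)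
            ≤ Q1seq n (Ioo a b) * Q2seq n (Ioo c d) :=
              tp2_of_lr (hlr n) measurableSet_Ioo measurableSet_Ioo
                (fun x hx y hy => le_trans (le_of_lt hx.2) (le_trans hbc (le_of_lt hy.1)))
          _ ≤ Q1seq n (Icc a b) * Q2seq n (Icc c d) :=
              mul_le_mul' (measure_mono Ioo_subset_Icc_self)
                (measure_mono Ioo_subset_Icc_self)
    _ ≤ (atTop.limsup fun n => Q1seq n (Icc a b)) *
        (atTop.limsup fun n => Q2seq n (Icc c d)) :=
        ENNReal.limsup_mul_le' (Or.inr hlimsup_ne2) (Or.inl hlimsup_ne1)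
    _ ≤ Q1 (Icc a b) * Q2 (Icc c d) := mul_le_mul' hclosed1 hclosed2

lemma iInter_Icc_gt (x r : ℝ) : ⋂ t > r, Icc (x - t) (x + t) = Icc (x - r) (x + r) := by
  ext z
  simp only [mem_iInter, mem_Icc]
  constructor
  · intro h
    constructor
    · by_contra hc
      push_neg at hc
      have h1 : r < x - z := by linarith
      have := (h ((r + (x - z)) / 2) (by linarith)).1
      linarith
    · by_contra hc
      push_neg at hc
      have h1 : r < z - x := by linarith
      have := (h ((r + (z - x)) / 2) (by linarith)).2
      linarith
  · intro h t ht
    exact ⟨by linarith [h.1], by linarith [h.2]⟩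

lemma cball_ineq (Q1 Q2 : Measure ℝ) [IsProbabilityMeasure Q1] [IsProbabilityMeasure Q2]
    (hmix : ∀ a b c d : ℝ, b ≤ c → Q1 (Ioo c d) * Q2 (Ioo a b) ≤ Q1 (Icc a b) * Q2 (Icc c d))
    {x y r : ℝ} (hsep : x + r < y - r) :
    Q1 (Metric.closedBall y r) * Q2 (Metric.closedBall x r) ≤
      Q1 (Metric.closedBall x r) * Q2 (Metric.closedBall y r) := by
  simp only [Real.closedBall_eq_Icc]
  have htend1 : Tendsto (fun t => Q1 (Icc (x - t) (x + t))) (𝓝[>] r)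
      (𝓝 (Q1 (Icc (x - r) (x + r)))) := by
    have := tendsto_measure_biInter_gt (μ := Q1) (s := fun t => Icc (x - t) (x + t)) (a := r)
      (fun t _ => measurableSet_Icc.nullMeasurableSet)
      (fun i j _ hij => Icc_subset_Icc (by linarith) (by linarith))
      ⟨r + 1, by linarith, measure_ne_top _ _⟩
    rwa [iInter_Icc_gt] at this
  have htend2 : Tendsto (fun t => Q2 (Icc (y - t) (y + t))) (𝓝[>] r)
      (𝓝 (Q2 (Icc (y - r) (y + r)))) := by
    have := tendsto_measure_biInter_gt (μ := Q2) (s := fun t => Icc (y - t) (y + t)) (a := r)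
      (fun t _ => measurableSet_Icc.nullMeasurableSet)
      (fun i j _ hij => Icc_subset_Icc (by linarith) (by linarith))
      ⟨r + 1, by linarith, measure_ne_top _ _⟩
    rwa [iInter_Icc_gt] at this
  have htend : Tendsto (fun t => Q1 (Icc (x - t) (x + t)) * Q2 (Icc (y - t) (y + t))) (𝓝[>] r)
      (𝓝 (Q1 (Icc (x - r) (x + r)) * Q2 (Icc (y - r) (y + r)))) :=
    ENNReal.Tendsto.mul htend1 (Or.inr (measure_ne_top _ _)) htend2
      (Or.inr (measure_ne_top _ _))
  apply ge_of_tendsto htend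
  have hmem : Ioo r ((y - x) / 2) ∈ 𝓝[>] r :=
    Ioo_mem_nhdsGT_of_mem ⟨le_refl r, by linarith⟩
  filter_upwards [hmem] with t ht
  calc Q1 (Icc (y - r) (y + r)) * Q2 (Icc (x - r) (x + r))
      ≤ Q1 (Ioo (y - t) (y + t)) * Q2 (Ioo (x - t) (x + t)) :=
        mul_le_mul' (measure_mono (Icc_subset_Ioo (by linarith [ht.1]) (by linarith [ht.1])))
          (measure_mono (Icc_subset_Ioo (by linarith [ht.1]) (by linarith [ht.1])))
    _ ≤ Q1 (Icc (x - t) (x + t)) * Q2 (Icc (y - t) (y + t)) :=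
        hmix _ _ _ _ (by linarith [ht.2])

lemma div_mul_div_le {a b c d A B : ℝ≥0∞} (h : a * b ≤ c * d) :
    a / A * (b / B) ≤ c / B * (d / A) := by
  rw [div_eq_mul_inv, div_eq_mul_inv, div_eq_mul_inv, div_eq_mul_inv]
  calc a * A⁻¹ * (b * B⁻¹) = a * b * (A⁻¹ * B⁻¹) := by ring
    _ ≤ c * d * (A⁻¹ * B⁻¹) := mul_le_mul_left h _
    _ = c * B⁻¹ * (d * A⁻¹) := by ring

theorem stmt_4 (Q1seq Q2seq : ℕ → Measure ℝ) (Q1 Q2 : Measure ℝ)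
    [∀ n, IsProbabilityMeasure (Q1seq n)] [∀ n, IsProbabilityMeasure (Q2seq n)]
    [IsProbabilityMeasure Q1] [IsProbabilityMeasure Q2]
    (hconv1 : ∀ f : BoundedContinuousFunction ℝ ℝ,
      Tendsto (fun n => ∫ x, f x ∂(Q1seq n)) atTop (nhds (∫ x, f x ∂Q1)))
    (hconv2 : ∀ f : BoundedContinuousFunction ℝ ℝ,
      Tendsto (fun n => ∫ x, f x ∂(Q2seq n)) atTop (nhds (∫ x, f x ∂Q2)))
    (hlr : ∀ n, LikelihoodRatioLE (Q1seq n) (Q2seq n)) :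
    LikelihoodRatioLE Q1 Q2 := by
  have hmix : ∀ a b c d : ℝ, b ≤ c → Q1 (Ioo c d) * Q2 (Ioo a b) ≤ Q1 (Icc a b) * Q2 (Icc c d) :=
    fun a b c d hbc => mixed_ineq Q1seq Q2seq Q1 Q2 hconv1 hconv2 hlr hbc
  set μ : Measure ℝ := Q1 + Q2 with hμ
  have hac1 : Q1 ≪ μ := Measure.absolutelyContinuous_of_le (Measure.le_add_right le_rfl)
  have hac2 : Q2 ≪ μ := Measure.absolutelyContinuous_of_le (Measure.le_add_left le_rfl)
  set f1 := Q1.rnDeriv μ with hf1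
  set f2 := Q2.rnDeriv μ with hf2
  set T : Set ℝ := {z | Tendsto
      (fun r => Q1 (Metric.closedBall z r) / μ (Metric.closedBall z r)) (𝓝[>] 0) (𝓝 (f1 z)) ∧
    Tendsto
      (fun r => Q2 (Metric.closedBall z r) / μ (Metric.closedBall z r)) (𝓝[>] 0) (𝓝 (f2 z)) ∧
    f1 z + f2 z = 1} with hT
  have haeT : ∀ᵐ z ∂μ, z ∈ T := by
    filter_upwards [Besicovitch.ae_tendsto_rnDeriv Q1 μ, Besicovitch.ae_tendsto_rnDeriv Q2 μ,
      Measure.rnDeriv_add Q1 Q2 μ, Measure.rnDeriv_self μ] with z h1 h2 h3 h4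
    refine ⟨h1, h2, ?_⟩
    calc f1 z + f2 z = (Q1 + Q2).rnDeriv μ z := h3.symm
      _ = 1 := h4
  set S : Set ℝ := (toMeasurable μ Tᶜ)ᶜ with hSdef
  have hSm : MeasurableSet S := (measurableSet_toMeasurable μ Tᶜ).compl
  have hST : S ⊆ T := by
    rw [hSdef, compl_subset_comm]
    exact subset_toMeasurable μ Tᶜ
  have hSc : μ Sᶜ = 0 := by
    rw [hSdef, compl_compl, measure_toMeasurable]
    exact haeT
  -- pairwise cross inequality on S
  have hcross : ∀ x ∈ S, ∀ y ∈ S, x < y → f1 y * f2 x ≤ f1 x * f2 y := by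
    intro x hx y hy hxy
    obtain ⟨hx1, hx2, hxs⟩ := hST hx
    obtain ⟨hy1, hy2, hys⟩ := hST hy
    have hfx1 : f1 x ≠ ∞ := fun ht => by simp [ht] at hxs
    have hfx2 : f2 x ≠ ∞ := fun ht => by simp [ht] at hxs
    have hfy1 : f1 y ≠ ∞ := fun ht => by simp [ht] at hys
    have hfy2 : f2 y ≠ ∞ := fun ht => by simp [ht] at hys
    refine le_of_tendsto_of_tendsto
      (ENNReal.Tendsto.mul hy1 (Or.inr hfx2) hx2 (Or.inr hfy1))
      (ENNReal.Tendsto.mul hx1 (Or.inr hfy2) hy2 (Or.inr hfx1)) ?_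
    have hmem : Ioo (0:ℝ) ((y - x) / 2) ∈ 𝓝[>] (0:ℝ) :=
      Ioo_mem_nhdsGT_of_mem ⟨le_refl 0, by linarith⟩
    filter_upwards [hmem] with r hr
    exact div_mul_div_le (cball_ineq Q1 Q2 hmix (by linarith [hr.1, hr.2]))
  -- the densities
  refine ⟨μ, S.indicator f1, S.indicator f2, inferInstance, ?_, ?_, ?_⟩
  · refine ⟨(Measure.measurable_rnDeriv Q1 μ).indicator hSm, fun B hB => ?_⟩
    calc Q1 B = Q1 (B ∩ S) + Q1 (B \ S) := (measure_inter_add_diff B hSm).symm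
      _ = Q1 (B ∩ S) := by
          rw [measure_mono_null (fun z hz => hz.2 : B \ S ⊆ Sᶜ) (hac1 hSc), add_zero]
      _ = ∫⁻ z in B ∩ S, f1 z ∂μ := (Measure.setLIntegral_rnDeriv hac1 _).symm
      _ = ∫⁻ z in B, S.indicator f1 z ∂μ := by
          rw [lintegral_indicator hSm, Measure.restrict_restrict hSm, inter_comm]
  · refine ⟨(Measure.measurable_rnDeriv Q2 μ).indicator hSm, fun B hB => ?_⟩
    calc Q2 B = Q2 (B ∩ S) + Q2 (B \ S) := (measure_inter_add_diff B hSm).symm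
      _ = Q2 (B ∩ S) := by
          rw [measure_mono_null (fun z hz => hz.2 : B \ S ⊆ Sᶜ) (hac2 hSc), add_zero]
      _ = ∫⁻ z in B ∩ S, f2 z ∂μ := (Measure.setLIntegral_rnDeriv hac2 _).symm
      _ = ∫⁻ z in B, S.indicator f2 z ∂μ := by
          rw [lintegral_indicator hSm, Measure.restrict_restrict hSm, inter_comm]
  · intro x y hxy h0x h0y
    by_cases hx : x ∈ S
    · by_cases hy : y ∈ S
      · simp only [indicator_of_mem hx, indicator_of_mem hy]
        rcases eq_or_lt_of_le hxy with rfl | hlt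
        · exact le_rfl
        · exact ratio_of_cross (hST hx).2.2 (hST hy).2.2
            (by rw [mul_comm]; exact hcross x hx y hy hlt)
      · simp [indicator_of_notMem hy] at h0y
    · simp [indicator_of_notMem hx] at h0x
end
end

section
/- Let Q1 and Q2 be probability measures on the real line. Then Q1 ≤_lr Q2 if and only if for every Borel set C ⊆ ℝ with Q1(C) > 0 and Q2(C) > 0, the conditional distributions satisfy Q1(·|C) ≤_lr Q2(·|C), where Q_j(·|C) denotes the measure B ↦ Q_j(B ∩ C)/Q_j(C). -/
open MeasureTheory Set Filter

noncomputable section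

lemma scaled_ratio (c1 c2 a b : ENNReal) (h10 : c1 ≠ 0) (h1t : c1 ≠ ⊤) :
    (c2 * a) / (c1 * b) = (c2 / c1) * (a / b) := by
  rw [div_eq_mul_inv, ENNReal.mul_inv (Or.inl h10) (Or.inl h1t), div_eq_mul_inv,
    div_eq_mul_inv]
  ring

lemma cond_isDensity (Q μ : Measure ℝ) (g : ℝ → ENNReal) (hd : IsDensity Q μ g)
    (C : Set ℝ) (hC : MeasurableSet C) :
    IsDensity (ProbabilityTheory.cond Q C) (μ.restrict C) (fun x => (Q C)⁻¹ * g x) := by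
  obtain ⟨hm, hQ⟩ := hd
  refine ⟨hm.const_mul _, fun B hB => ?_⟩
  rw [ProbabilityTheory.cond_apply hC, lintegral_const_mul _ hm,
    Measure.restrict_restrict hB, ← hQ _ (hB.inter hC)]
  rw [Set.inter_comm]

theorem stmt_6 (Q1 Q2 : Measure ℝ) [IsProbabilityMeasure Q1] [IsProbabilityMeasure Q2] :
    LikelihoodRatioLE Q1 Q2 ↔
    ∀ C : Set ℝ, MeasurableSet C → 0 < Q1 C → 0 < Q2 C →
      LikelihoodRatioLE (ProbabilityTheory.cond Q1 C) (ProbabilityTheory.cond Q2 C) := by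
  constructor
  · rintro ⟨μ, g1, g2, hσ, hd1, hd2, hmono⟩ C hC h1 h2
    refine ⟨μ.restrict C, fun x => (Q1 C)⁻¹ * g1 x, fun x => (Q2 C)⁻¹ * g2 x,
      Restrict.sigmaFinite μ C, cond_isDensity Q1 μ g1 hd1 C hC,
      cond_isDensity Q2 μ g2 hd2 C hC, fun x y hxy hx hy => ?_⟩
    have h1t : (Q1 C)⁻¹ ≠ ⊤ := ENNReal.inv_ne_top.mpr h1.ne'
    have h10 : (Q1 C)⁻¹ ≠ 0 := ENNReal.inv_ne_zero.mpr (measure_ne_top Q1 C)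
    have h2t : (Q2 C)⁻¹ ≠ ⊤ := ENNReal.inv_ne_top.mpr h2.ne'
    have h20 : (Q2 C)⁻¹ ≠ 0 := ENNReal.inv_ne_zero.mpr (measure_ne_top Q2 C)
    have key : ∀ z : ℝ, 0 < (Q1 C)⁻¹ * g1 z + (Q2 C)⁻¹ * g2 z → 0 < g1 z + g2 z := by
      intro z hz
      by_contra h
      push_neg at h
      simp only [nonpos_iff_eq_zero, add_eq_zero] at h
      simp [h.1, h.2] at hz
    rw [scaled_ratio _ _ _ _ h10 h1t, scaled_ratio _ _ _ _ h10 h1t]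
    exact mul_le_mul_right (hmono x y hxy (key x hx) (key y hy)) _
  · intro h
    have h1 : (0 : ENNReal) < Q1 univ := by simp
    have h2 : (0 : ENNReal) < Q2 univ := by simp
    have := h univ MeasurableSet.univ h1 h2
    simpa [ProbabilityTheory.cond_univ] using this
end
end

section
/- Let Q1 and Q2 be probability measures on the real line. Then Q1 ≤_lr Q2 if and only if for every Borel set C ⊆ ℝ with Q1(C) > 0 and Q2(C) > 0, the conditional distributions satisfy Q1(·|C) ≤_st Q2(·|C), i.e. Q1((y,∞) ∩ C)/Q1(C) ≤ Q2((y,∞) ∩ C)/Q2(C) for all y ∈ ℝ. -/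
open MeasureTheory Set Filter

noncomputable section

/-!
Both sides are equivalent to the cross inequality `Q1 B * Q2 A ≤ Q2 B * Q1 A` for Borel sets
`A ⊆ (-∞, y]` and `B ⊆ (y, ∞)`; for the conditional order this is the case `C = A ∪ B`.
Given densities with nondecreasing ratio, the inequality is the pointwise
`g1 z * g2 x ≤ g2 z * g1 x` (`x ≤ y < z`) integrated over `A × B`.
Conversely, let `g = dQ2/dμ` for `μ = Q1 + Q2`. If `A = (-∞, y] ∩ {g > β}` and
`B = (y, ∞) ∩ {g < α}` with `α < β` both had positive `μ`-measure, the cross inequality would give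
`β μ(A) μ(B) ≤ Q2(A) μ(B) ≤ Q2(B) μ(A) ≤ α μ(A) μ(B)`. Hence, off a countable union of null sets
indexed by rational `y, α, β`, the density `g` is monotone, so it has a monotone version; taking it
with values in `[0, 1]`, the densities `1 - g` of `Q1` and `g` of `Q2` have a nondecreasing ratio.
-/

open scoped ENNReal

namespace ENNReal

theorem div_le_div_iff_mul_le_mul {a b c d : ℝ≥0∞} (hb₀ : b ≠ 0) (hb : b ≠ ∞) (hd₀ : d ≠ 0)
    (hd : d ≠ ∞) : a / b ≤ c / d ↔ a * d ≤ c * b := by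
  rw [ENNReal.div_le_iff hb₀ hb, div_eq_mul_inv, mul_right_comm, ← div_eq_mul_inv,
    ENNReal.le_div_iff_mul_le (Or.inl hd₀) (Or.inl hd)]

theorem mul_le_mul_of_div_le_div_of_add_pos {p₁ p₂ q₁ q₂ : ℝ≥0∞} (hp₁ : p₁ ≠ ∞) (hq₁ : q₁ ≠ ∞)
    (hq₂ : q₂ ≠ ∞) (h : 0 < p₁ + p₂ → 0 < q₁ + q₂ → p₂ / p₁ ≤ q₂ / q₁) :
    p₂ * q₁ ≤ p₁ * q₂ := by
  rcases eq_or_ne p₂ 0 with hp₂ | hp₂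
  · simp [hp₂]
  rcases eq_or_ne q₁ 0 with hq₁₀ | hq₁₀
  · simp [hq₁₀]
  have hratio := h (by positivity) (by positivity)
  rcases eq_or_ne p₁ 0 with hp₁₀ | hp₁₀
  · rw [hp₁₀, ENNReal.div_zero hp₂, top_le_iff, ENNReal.div_eq_top] at hratio
    tauto
  rw [mul_comm p₁]
  exact (div_le_div_iff_mul_le_mul hp₁₀ hp₁ hq₁₀ hq₁).mp hratio

theorem div_add_le_div_add_iff {a₁ b₁ a₂ b₂ : ℝ≥0∞} (h₁₀ : a₁ + b₁ ≠ 0) (h₁ : a₁ + b₁ ≠ ∞)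
    (h₂₀ : a₂ + b₂ ≠ 0) (h₂ : a₂ + b₂ ≠ ∞) :
    b₁ / (a₁ + b₁) ≤ b₂ / (a₂ + b₂) ↔ b₁ * a₂ ≤ b₂ * a₁ := by
  have hb : b₁ * b₂ ≠ ∞ :=
    ENNReal.mul_ne_top (ENNReal.add_ne_top.mp h₁).2 (ENNReal.add_ne_top.mp h₂).2
  rw [div_le_div_iff_mul_le_mul h₁₀ h₁ h₂₀ h₂, mul_add, mul_add, mul_comm b₂ b₁,
    ENNReal.add_le_add_iff_right hb]

end ENNReal

theorem lintegral_mul_lintegral_le_of_ae_mul_le {α β : Type*} [MeasurableSpace α]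
    [MeasurableSpace β] {ν : Measure α} {ρ : Measure β} {f₁ f₂ : α → ℝ≥0∞} {g₁ g₂ : β → ℝ≥0∞}
    (hf₁ : Measurable f₁) (hf₂ : Measurable f₂) (hg₁ : Measurable g₁) (hg₂ : Measurable g₂)
    (h : ∀ᵐ z ∂ν, ∀ᵐ x ∂ρ, f₁ z * g₂ x ≤ f₂ z * g₁ x) :
    (∫⁻ z, f₁ z ∂ν) * ∫⁻ x, g₂ x ∂ρ ≤ (∫⁻ z, f₂ z ∂ν) * ∫⁻ x, g₁ x ∂ρ := by
  calc (∫⁻ z, f₁ z ∂ν) * ∫⁻ x, g₂ x ∂ρ = ∫⁻ z, ∫⁻ x, f₁ z * g₂ x ∂ρ ∂ν := by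
        simp_rw [lintegral_const_mul _ hg₂, lintegral_mul_const _ hf₁]
    _ ≤ ∫⁻ z, ∫⁻ x, f₂ z * g₁ x ∂ρ ∂ν :=
        lintegral_mono_ae (h.mono fun z hz ↦ lintegral_mono_ae hz)
    _ = (∫⁻ z, f₂ z ∂ν) * ∫⁻ x, g₁ x ∂ρ := by
        simp_rw [lintegral_const_mul _ hg₁, lintegral_mul_const _ hf₂]

theorem measure_Iic_inter_add_Ioi_inter (μ : Measure ℝ) (y : ℝ) {C : Set ℝ}
    (hC : MeasurableSet C) : μ (Iic y ∩ C) + μ (Ioi y ∩ C) = μ C := by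
  rw [← measure_union ((Iic_disjoint_Ioi le_rfl).mono inter_subset_left inter_subset_left)
    (measurableSet_Ioi.inter hC), ← union_inter_distrib_right, Iic_union_Ioi, univ_inter]

def SetwiseLikelihoodRatioLE (Q1 Q2 : Measure ℝ) : Prop :=
  ∀ (y : ℝ) ⦃A B : Set ℝ⦄, MeasurableSet A → MeasurableSet B → A ⊆ Iic y → B ⊆ Ioi y →
    Q1 B * Q2 A ≤ Q2 B * Q1 A

theorem IsDensity.ae_ne_top {Q μ : Measure ℝ} [IsFiniteMeasure Q] {g : ℝ → ℝ≥0∞}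
    (hg : IsDensity Q μ g) : ∀ᵐ x ∂μ, g x ≠ ∞ := by
  refine ae_lt_top' hg.1.aemeasurable ?_ |>.mono fun _ ↦ LT.lt.ne
  rw [← setLIntegral_univ, ← hg.2 univ MeasurableSet.univ]
  exact measure_ne_top Q univ

theorem LikelihoodRatioLE.setwise {Q1 Q2 : Measure ℝ} [IsFiniteMeasure Q1] [IsFiniteMeasure Q2]
    (h : LikelihoodRatioLE Q1 Q2) : SetwiseLikelihoodRatioLE Q1 Q2 := by
  obtain ⟨μ, g1, g2, -, hg1, hg2, hmono⟩ := h
  intro y A B hA hB hAy hBy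
  have hcross : ∀ x ∈ A, ∀ z ∈ B, g1 x ≠ ∞ → g1 z ≠ ∞ → g2 z ≠ ∞ → g1 z * g2 x ≤ g2 z * g1 x :=
    fun x hx z hz hx₁ hz₁ hz₂ ↦ by
      rw [mul_comm, mul_comm (g2 z)]
      exact ENNReal.mul_le_mul_of_div_le_div_of_add_pos hx₁ hz₁ hz₂
        (hmono x z ((hAy hx).trans (hBy hz).le))
  rw [hg1.2 B hB, hg2.2 A hA, hg2.2 B hB, hg1.2 A hA]
  refine lintegral_mul_lintegral_le_of_ae_mul_le hg1.1 hg2.1 hg1.1 hg2.1 ?_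
  filter_upwards [ae_restrict_mem hB, ae_restrict_of_ae hg1.ae_ne_top,
    ae_restrict_of_ae hg2.ae_ne_top] with z hz hz₁ hz₂
  filter_upwards [ae_restrict_mem hA, ae_restrict_of_ae hg1.ae_ne_top] with x hx hx₁
  exact hcross x hx z hz hx₁ hz₁ hz₂

theorem setwiseLikelihoodRatioLE_iff {Q1 Q2 : Measure ℝ} [IsFiniteMeasure Q1]
    [IsFiniteMeasure Q2] :
    SetwiseLikelihoodRatioLE Q1 Q2 ↔
      ∀ C : Set ℝ, MeasurableSet C → 0 < Q1 C → 0 < Q2 C →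
        ∀ y : ℝ, Q1 (Ioi y ∩ C) / Q1 C ≤ Q2 (Ioi y ∩ C) / Q2 C := by
  have key : ∀ {C : Set ℝ}, MeasurableSet C → 0 < Q1 C → 0 < Q2 C → ∀ y : ℝ,
      Q1 (Ioi y ∩ C) / Q1 C ≤ Q2 (Ioi y ∩ C) / Q2 C ↔
        Q1 (Ioi y ∩ C) * Q2 (Iic y ∩ C) ≤ Q2 (Ioi y ∩ C) * Q1 (Iic y ∩ C) := by
    intro C hC h1 h2 y
    rw [← measure_Iic_inter_add_Ioi_inter Q1 y hC] at h1 ⊢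
    rw [← measure_Iic_inter_add_Ioi_inter Q2 y hC] at h2 ⊢
    exact ENNReal.div_add_le_div_add_iff h1.ne' (by finiteness) h2.ne' (by finiteness)
  constructor
  · intro h C hC h1 h2 y
    exact (key hC h1 h2 y).mpr <| h y (measurableSet_Iic.inter hC) (measurableSet_Ioi.inter hC)
      inter_subset_left inter_subset_left
  · intro h y A B hA hB hAy hBy
    have hB_eq : Ioi y ∩ (A ∪ B) = B := by
      rw [inter_union_distrib_left, ((Iic_disjoint_Ioi le_rfl).symm.mono_right hAy).inter_eq,
        empty_union, inter_eq_right.mpr hBy]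
    have hA_eq : Iic y ∩ (A ∪ B) = A := by
      rw [inter_union_distrib_left, ((Iic_disjoint_Ioi le_rfl).mono_right hBy).inter_eq,
        union_empty, inter_eq_right.mpr hAy]
    rcases eq_zero_or_pos (Q1 (A ∪ B)) with h1 | h1
    · simp [measure_mono_null subset_union_right h1]
    rcases eq_zero_or_pos (Q2 (A ∪ B)) with h2 | h2
    · simp [measure_mono_null subset_union_left h2]
    simpa only [hA_eq, hB_eq] using (key (hA.union hB) h1 h2 y).mp (h _ (hA.union hB) h1 h2 y)

theorem SetwiseLikelihoodRatioLE.measure_eq_zero_or {Q1 Q2 : Measure ℝ} [IsFiniteMeasure Q1]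
    [IsFiniteMeasure Q2] (h : SetwiseLikelihoodRatioLE Q1 Q2) {g : ℝ → ℝ≥0∞}
    (hg : IsDensity Q2 (Q1 + Q2) g) (y : ℝ) {α β : ℝ≥0∞} (hαβ : α < β) :
    (Q1 + Q2) (Iic y ∩ {x | β < g x}) = 0 ∨ (Q1 + Q2) (Ioi y ∩ {x | g x < α}) = 0 := by
  set μ := Q1 + Q2
  set A := Iic y ∩ {x | β < g x}
  set B := Ioi y ∩ {x | g x < α}
  have hA : MeasurableSet A := measurableSet_Iic.inter (hg.1 measurableSet_Ioi)
  have hB : MeasurableSet B := measurableSet_Ioi.inter (hg.1 measurableSet_Iio)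
  by_contra! hpos
  have hlower : β * μ A ≤ Q2 A := by
    rw [hg.2 A hA, ← setLIntegral_const]
    exact setLIntegral_mono hg.1 fun x hx ↦ hx.2.le
  have hupper : Q2 B ≤ α * μ B := by
    rw [hg.2 B hB, ← setLIntegral_const]
    exact setLIntegral_mono measurable_const fun x hx ↦ hx.2.le
  have hμ : μ B * Q2 A ≤ Q2 B * μ A := by
    calc μ B * Q2 A = Q1 B * Q2 A + Q2 B * Q2 A := by rw [Measure.add_apply, add_mul]
      _ ≤ Q2 B * Q1 A + Q2 B * Q2 A :=
        add_le_add_left (h y hA hB inter_subset_left inter_subset_left) _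
      _ = Q2 B * μ A := by rw [Measure.add_apply, mul_add]
  have : β * (μ A * μ B) ≤ α * (μ A * μ B) :=
    calc β * (μ A * μ B) = μ B * (β * μ A) := by ring
      _ ≤ μ B * Q2 A := by gcongr
      _ ≤ Q2 B * μ A := hμ
      _ ≤ α * μ B * μ A := by gcongr
      _ = α * (μ A * μ B) := by ring
  exact hαβ.not_ge <| (ENNReal.mul_le_mul_iff_left (mul_ne_zero hpos.1 hpos.2)
    (by finiteness)).mp this

theorem exists_monotone_ae_eq_of_measure_eq_zero_or {μ : Measure ℝ} {f : ℝ → ℝ≥0∞}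
    (h : ∀ (y : ℝ) (α β : ℝ≥0∞), α < β →
      μ (Iic y ∩ {x | β < f x}) = 0 ∨ μ (Ioi y ∩ {x | f x < α}) = 0) :
    ∃ g : ℝ → ℝ≥0∞, Monotone g ∧ f =ᵐ[μ] g := by
  classical
  let r : ℚ → ℝ≥0∞ := fun q ↦ Real.toNNReal q
  let S : ℚ → ℚ → ℚ → Set ℝ := fun y a b ↦
    if μ (Iic (y : ℝ) ∩ {x | r b < f x}) = 0 then Iic (y : ℝ) ∩ {x | r b < f x}
    else Ioi (y : ℝ) ∩ {x | f x < r a}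
  let N : Set ℝ := ⋃ (y : ℚ) (a : ℚ) (b : ℚ) (_ : r a < r b), S y a b
  have hN : μ N = 0 := by
    refine measure_iUnion_null fun y ↦ measure_iUnion_null fun a ↦ measure_iUnion_null fun b ↦
      measure_iUnion_null fun hab ↦ ?_
    by_cases h0 : μ (Iic (y : ℝ) ∩ {x | r b < f x}) = 0
    · simp [S, h0]
    · simpa [S, h0] using (h y (r a) (r b) hab).resolve_left h0
  have hmemN : ∀ {w : ℝ} (y a b : ℚ), r a < r b → w ∈ S y a b → w ∈ N := fun y a b hab hw ↦ by
    simp only [N, mem_iUnion]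
    exact ⟨y, a, b, hab, hw⟩
  have hmono : MonotoneOn f Nᶜ := by
    intro x hx z hz hxz
    by_contra! hlt
    obtain ⟨a, -, hza, hab'⟩ := ENNReal.lt_iff_exists_rat_btwn.mp hlt
    obtain ⟨b, -, hab, hbx⟩ := ENNReal.lt_iff_exists_rat_btwn.mp hab'
    obtain ⟨y, hxy, hyz⟩ := exists_rat_btwn (hxz.lt_of_ne (by rintro rfl; exact hlt.false))
    have hS : x ∈ S y a b ∨ z ∈ S y a b := by
      by_cases h0 : μ (Iic (y : ℝ) ∩ {x | r b < f x}) = 0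
      · exact Or.inl (by simpa [S, h0] using ⟨hxy.le, hbx⟩)
      · exact Or.inr (by simpa [S, h0] using ⟨hyz, hza⟩)
    exact hS.elim (hx <| hmemN y a b hab ·) (hz <| hmemN y a b hab ·)
  obtain ⟨g, hg, hfg⟩ := hmono.exists_monotone_extension (OrderBot.bddBelow _) (OrderTop.bddAbove _)
  exact ⟨g, hg, measure_mono_null (fun x hx ↦ by_contra fun hxN ↦ hx (hfg hxN)) hN⟩

theorem IsDensity.one_sub {Q1 Q2 : Measure ℝ} [IsFiniteMeasure Q2] {g : ℝ → ℝ≥0∞}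
    (hg : IsDensity Q2 (Q1 + Q2) g) (hg₁ : ∀ x, g x ≤ 1) : IsDensity Q1 (Q1 + Q2) (1 - g) := by
  refine ⟨measurable_const.sub hg.1, fun B hB ↦ ?_⟩
  have hsum : ∫⁻ x in B, (1 - g) x ∂(Q1 + Q2) + Q2 B = (Q1 + Q2) B := by
    rw [hg.2 B hB, ← lintegral_add_right _ hg.1, ← setLIntegral_one]
    simp_rw [Pi.sub_apply, Pi.one_apply, tsub_add_cancel_of_le (hg₁ _)]
  rw [Measure.add_apply] at hsum
  exact ((ENNReal.add_left_inj (measure_ne_top Q2 B)).mp hsum).symm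

theorem SetwiseLikelihoodRatioLE.likelihoodRatioLE {Q1 Q2 : Measure ℝ} [IsFiniteMeasure Q1]
    [IsFiniteMeasure Q2] (h : SetwiseLikelihoodRatioLE Q1 Q2) : LikelihoodRatioLE Q1 Q2 := by
  have hle : Q2 ≤ Q1 + Q2 := Measure.le_add_left le_rfl
  have hdens : IsDensity Q2 (Q1 + Q2) (Q2.rnDeriv (Q1 + Q2)) :=
    ⟨Measure.measurable_rnDeriv _ _, fun B hB ↦
      (Measure.setLIntegral_rnDeriv' (Measure.absolutelyContinuous_of_le hle) hB).symm⟩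
  obtain ⟨g, hg_mono, hg_ae⟩ := exists_monotone_ae_eq_of_measure_eq_zero_or
    fun y _ _ hαβ ↦ h.measure_eq_zero_or hdens y hαβ
  let g' : ℝ → ℝ≥0∞ := fun x ↦ min (g x) 1
  have hg'_mono : Monotone g' := hg_mono.min monotone_const
  have hdens' : IsDensity Q2 (Q1 + Q2) g' := by
    refine ⟨hg'_mono.measurable, fun B hB ↦
      (hdens.2 B hB).trans (lintegral_congr_ae (ae_restrict_of_ae ?_))⟩
    filter_upwards [hg_ae, Measure.rnDeriv_le_one_of_le hle] with x hx hx₁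
    rw [hx] at hx₁
    exact hx.trans (min_eq_left hx₁).symm
  refine ⟨Q1 + Q2, 1 - g', g', inferInstance, hdens'.one_sub fun x ↦ min_le_right _ _, hdens',
    fun x z hxz _ _ ↦ ?_⟩
  exact ENNReal.div_le_div (hg'_mono hxz) (tsub_le_tsub_left (hg'_mono hxz) 1)

theorem stmt_7 (Q1 Q2 : Measure ℝ) [IsProbabilityMeasure Q1] [IsProbabilityMeasure Q2] :
    LikelihoodRatioLE Q1 Q2 ↔
    ∀ C : Set ℝ, MeasurableSet C → 0 < Q1 C → 0 < Q2 C →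
      ∀ y : ℝ, Q1 (Ioi y ∩ C) / Q1 C ≤ Q2 (Ioi y ∩ C) / Q2 C := by
  rw [← setwiseLikelihoodRatioLE_iff]
  exact ⟨LikelihoodRatioLE.setwise, SetwiseLikelihoodRatioLE.likelihoodRatioLE⟩
end
end

section
/- Let μ and ν be finite measures on the real line such that ν(B) ≤ μ(B) for all Borel sets B, and suppose μ((y,z])·ν((x,y]) ≤ μ((x,y])·ν((y,z]) whenever x < y < z. Define f(x) := sup_{a < x} ν((a,x])/μ((a,x]) ∈ [0,1], with the convention 0/0 := 0. Then: f is nondecreasing; f is a density of ν with respect to μ; if μ((x',x]) = 0 for numbers x' < x then f(x') = f(x); if x ∈ ℝ satisfies μ((a,x]) > 0 for all a < x, then f(x) = lim_{a→x−} ν((a,x])/μ((a,x]); and in particular f(x) = ν({x})/μ({x}) whenever μ({x}) > 0. -/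
/-! The ratio condition gives `f s * μ (s, t] ≤ ν (s, t] ≤ f t * μ (s, t]`, and together with the
monotonicity of `f` this squeezes `ν B / μ B` over closed balls `B` shrinking to a continuity
point of `f` in the support of `μ` towards `f x`. Besicovitch differentiation identifies this
limit `μ`-a.e. with `dν/dμ`. The discontinuities of the monotone `f` are countable, so up to a
`μ`-null set they are atoms of `μ`, where `dν/dμ = ν {x} / μ {x}`, which is also the left limit
of the ratios defining `f x`. -/

open MeasureTheory Set Filter
open scoped ENNReal Topology

noncomputable section

def leftDensity (μ ν : Measure ℝ) (x : ℝ) : ℝ≥0∞ := ⨆ a ∈ Iio x, ν (Ioc a x) / μ (Ioc a x)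

/-- `ν (x, y] / μ (x, y] ≤ ν (y, z] / μ (y, z]`, cross-multiplied so that no `0 / 0` occurs. -/
def HasMonotoneRatios (μ ν : Measure ℝ) : Prop :=
  ∀ x y z : ℝ, x < y → y < z → μ (Ioc y z) * ν (Ioc x y) ≤ μ (Ioc x y) * ν (Ioc y z)

lemma tendsto_measure_Ioc_nhdsLT (m : Measure ℝ) [IsFiniteMeasure m] (x : ℝ) :
    Tendsto (fun a => m (Ioc a x)) (𝓝[<] x) (𝓝 (m {x})) := by
  -- in `ℝᵒᵈ`, `𝓝[<] x` is a right neighbourhood filter and the sets `Ioc a x` decrease in `a`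
  have h := tendsto_measure_biInter_gt (μ := m) (ι := ℝᵒᵈ) (a := OrderDual.toDual x)
    (s := fun a => Ioc (OrderDual.ofDual a) x) (fun _ _ => nullMeasurableSet_Ioc)
    (fun _ _ _ hij => Ioc_subset_Ioc_left hij)
    ⟨OrderDual.toDual (x - 1), show x - 1 < x by linarith, measure_ne_top _ _⟩
  have hI : (⋂ a > OrderDual.toDual x, Ioc (OrderDual.ofDual a) x) = {x} := by
    ext y
    simp only [mem_iInter, mem_Ioc, mem_singleton_iff]
    refine ⟨fun hy => le_antisymm ?_ ?_, fun hy => ?_⟩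
    · exact (hy (OrderDual.toDual (x - 1)) (show x - 1 < x by linarith)).2
    · exact le_of_forall_lt fun a ha => (hy (OrderDual.toDual a) ha).1
    · subst hy; exact fun a ha => ⟨ha, le_rfl⟩
  rwa [hI] at h

lemma Set.Countable.ae_mem_imp_measure_singleton_ne_zero {α : Type*} [MeasurableSpace α]
    {μ : Measure α} {S : Set α} (hS : S.Countable) : ∀ᵐ x ∂μ, x ∈ S → μ {x} ≠ 0 := by
  have hnull : μ (⋃ x ∈ {x | x ∈ S ∧ μ {x} = 0}, {x}) = 0 :=
    (measure_biUnion_null_iff (hS.mono fun _ hx => hx.1)).2 fun _ hx => hx.2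
  rw [biUnion_of_singleton] at hnull
  filter_upwards [measure_eq_zero_iff_ae_notMem.1 hnull] with x hx hxS h0
  exact hx ⟨hxS, h0⟩

lemma MeasureTheory.Measure.rnDeriv_eq_div_of_measure_singleton_ne_zero {α : Type*}
    [MeasurableSpace α] [MeasurableSingletonClass α] {μ ν : Measure α} [ν.HaveLebesgueDecomposition μ]
    (hac : ν ≪ μ) {x : α} (hx : μ {x} ≠ 0) (hx' : μ {x} ≠ ∞) :
    ν.rnDeriv μ x = ν {x} / μ {x} := by
  conv_rhs => rw [← Measure.withDensity_rnDeriv_eq ν μ hac]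
  rw [withDensity_apply _ (measurableSet_singleton x), lintegral_singleton,
    ENNReal.mul_div_cancel_right hx hx']

section

variable {μ ν : Measure ℝ} {a b s t x x' y : ℝ}

lemma leftDensity_le_one (hle : ν ≤ μ) (x : ℝ) : leftDensity μ ν x ≤ 1 :=
  iSup₂_le fun a _ => ENNReal.div_le_of_le_mul (by simpa using hle (Ioc a x))

lemma ratio_le_leftDensity (hax : a < x) :
    ν (Ioc a x) / μ (Ioc a x) ≤ leftDensity μ ν x :=
  le_biSup (fun a => ν (Ioc a x) / μ (Ioc a x)) hax

lemma measure_Ioc_le_leftDensity_mul [IsFiniteMeasure μ] (hac : ν ≪ μ) (s t : ℝ) :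
    ν (Ioc s t) ≤ leftDensity μ ν t * μ (Ioc s t) := by
  rcases lt_or_ge s t with hst | hts
  · calc ν (Ioc s t) = ν (Ioc s t) / μ (Ioc s t) * μ (Ioc s t) :=
          (ENNReal.div_mul_cancel' (fun h => hac h) (fun h => absurd h (measure_ne_top _ _))).symm
      _ ≤ leftDensity μ ν t * μ (Ioc s t) := by gcongr; exact ratio_le_leftDensity hst
  · simp [Ioc_eq_empty_of_le hts]

lemma leftDensity_eq_of_measure_Ioc_eq_zero (hac : ν ≪ μ) (hx'x : x' < x)
    (h0 : μ (Ioc x' x) = 0) : leftDensity μ ν x' = leftDensity μ ν x := by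
  have hsplit : ∀ m : Measure ℝ, m (Ioc x' x) = 0 → ∀ a < x', m (Ioc a x) = m (Ioc a x') :=
    fun m hm a ha => by
      rw [← Ioc_union_Ioc_eq_Ioc ha.le hx'x.le,
        measure_union (Ioc_disjoint_Ioc_of_le le_rfl) measurableSet_Ioc, hm, add_zero]
  refine le_antisymm (iSup₂_le fun a ha => ?_) (iSup₂_le fun a (ha : a < x) => ?_)
  · rw [← hsplit μ h0 a ha, ← hsplit ν (hac h0) a ha]
    exact ratio_le_leftDensity (lt_trans ha hx'x)
  · rcases lt_or_ge a x' with hax' | hx'a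
    · rw [hsplit μ h0 a hax', hsplit ν (hac h0) a hax']
      exact ratio_le_leftDensity hax'
    · have hμ : μ (Ioc a x) = 0 := measure_mono_null (Ioc_subset_Ioc_left hx'a) h0
      simp [hμ, hac hμ]

variable [IsFiniteMeasure μ] (hTP : HasMonotoneRatios μ ν)
include hTP

lemma leftDensity_le_ratio (hxy : x < y) (hμ : μ (Ioc x y) ≠ 0) :
    leftDensity μ ν x ≤ ν (Ioc x y) / μ (Ioc x y) := by
  refine iSup₂_le fun a (ha : a < x) => ENNReal.div_le_of_le_mul ?_
  rw [← ENNReal.mul_div_right_comm, ENNReal.le_div_iff_mul_le (Or.inl hμ)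
    (Or.inl (measure_ne_top _ _)), mul_comm, mul_comm (ν _)]
  exact hTP a x y ha hxy

lemma leftDensity_mul_le_measure_Ioc (s t : ℝ) :
    leftDensity μ ν s * μ (Ioc s t) ≤ ν (Ioc s t) := by
  rcases eq_or_ne (μ (Ioc s t)) 0 with h0 | h0
  · simp [h0]
  have hst : s < t := by
    by_contra! hts
    exact h0 (by simp [Ioc_eq_empty_of_le hts])
  calc leftDensity μ ν s * μ (Ioc s t) ≤ ν (Ioc s t) / μ (Ioc s t) * μ (Ioc s t) := by
        gcongr; exact leftDensity_le_ratio hTP hst h0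
    _ = ν (Ioc s t) := ENNReal.div_mul_cancel h0 (measure_ne_top _ _)

variable (hac : ν ≪ μ)
include hac

lemma monotone_leftDensity : Monotone (leftDensity μ ν) := by
  intro x y hxy
  rcases hxy.lt_or_eq with hxy | rfl
  · by_cases h0 : μ (Ioc x y) = 0
    · exact (leftDensity_eq_of_measure_Ioc_eq_zero hac hxy h0).le
    · exact (leftDensity_le_ratio hTP hxy h0).trans (ratio_le_leftDensity hxy)
  · exact le_rfl

lemma ratio_le_ratio_of_lt (hab : a < b) (hbx : b < x) (hμ : μ (Ioc b x) ≠ 0) :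
    ν (Ioc a x) / μ (Ioc a x) ≤ ν (Ioc b x) / μ (Ioc b x) := by
  set q := ν (Ioc b x) / μ (Ioc b x)
  refine ENNReal.div_le_of_le_mul ?_
  have hf : leftDensity μ ν b ≤ q := leftDensity_le_ratio hTP hbx hμ
  rw [← Ioc_union_Ioc_eq_Ioc hab.le hbx.le,
    measure_union (Ioc_disjoint_Ioc_of_le le_rfl) measurableSet_Ioc,
    measure_union (Ioc_disjoint_Ioc_of_le le_rfl) measurableSet_Ioc, mul_add]
  gcongr
  · exact (measure_Ioc_le_leftDensity_mul hac a b).trans (by gcongr)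
  · exact (ENNReal.div_mul_cancel hμ (measure_ne_top _ _)).ge

lemma tendsto_ratio_leftDensity (hx : ∀ a < x, 0 < μ (Ioc a x)) :
    Tendsto (fun a => ν (Ioc a x) / μ (Ioc a x)) (𝓝[<] x) (𝓝 (leftDensity μ ν x)) := by
  have hmono : MonotoneOn (fun a => ν (Ioc a x) / μ (Ioc a x)) (Iio x) := by
    intro a _ b (hb : b < x) hab
    rcases hab.lt_or_eq with hab | rfl
    · exact ratio_le_ratio_of_lt hTP hac hab hb (hx b hb).ne'
    · exact le_rfl
  have h := hmono.tendsto_nhdsLT (OrderTop.bddAbove _)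
  rwa [sSup_image] at h

variable [IsFiniteMeasure ν]

lemma leftDensity_eq_div_of_measure_singleton_pos (hx : 0 < μ {x}) :
    leftDensity μ ν x = ν {x} / μ {x} := by
  have hIoc : ∀ a < x, 0 < μ (Ioc a x) := fun a ha =>
    hx.trans_le (measure_mono (singleton_subset_iff.2 ⟨ha, le_rfl⟩))
  refine tendsto_nhds_unique (tendsto_ratio_leftDensity hTP hac hIoc) ?_
  exact ENNReal.Tendsto.div (tendsto_measure_Ioc_nhdsLT ν x) (Or.inr hx.ne')
    (tendsto_measure_Ioc_nhdsLT μ x) (Or.inl (measure_ne_top _ _))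

lemma measure_singleton_eq_leftDensity_mul (x : ℝ) : ν {x} = leftDensity μ ν x * μ {x} := by
  rcases eq_or_ne (μ {x}) 0 with h0 | h0
  · simp [h0, hac h0]
  · rw [leftDensity_eq_div_of_measure_singleton_pos hTP hac (pos_iff_ne_zero.2 h0),
      ENNReal.div_mul_cancel h0 (measure_ne_top _ _)]

lemma measure_Icc_mem_Icc_leftDensity_mul (hst : s ≤ t) :
    ν (Icc s t) ∈ Icc (leftDensity μ ν s * μ (Icc s t)) (leftDensity μ ν t * μ (Icc s t)) := by
  have hsplit : ∀ m : Measure ℝ, m (Icc s t) = m {s} + m (Ioc s t) := fun m => by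
    rw [← Ioc_insert_left hst, insert_eq, measure_union
      (disjoint_singleton_left.2 fun h : s ∈ Ioc s t => lt_irrefl s h.1) measurableSet_Ioc]
  have hmono := monotone_leftDensity hTP hac hst
  rw [hsplit ν, hsplit μ, measure_singleton_eq_leftDensity_mul hTP hac, mul_add, mul_add]
  constructor
  · gcongr
    exact leftDensity_mul_le_measure_Ioc hTP s t
  · gcongr
    exact measure_Ioc_le_leftDensity_mul hac s t

lemma tendsto_ratio_closedBall_leftDensity (hx : x ∈ μ.support)
    (hcont : ContinuousAt (leftDensity μ ν) x) :
    Tendsto (fun r => ν (Metric.closedBall x r) / μ (Metric.closedBall x r)) (𝓝[>] 0)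
      (𝓝 (leftDensity μ ν x)) := by
  have hleft : Tendsto (fun r => leftDensity μ ν (x - r)) (𝓝[>] 0) (𝓝 (leftDensity μ ν x)) :=
    hcont.tendsto.comp (tendsto_nhdsWithin_of_tendsto_nhds
      (by simpa using (continuous_sub_left x).tendsto 0))
  have hright : Tendsto (fun r => leftDensity μ ν (x + r)) (𝓝[>] 0) (𝓝 (leftDensity μ ν x)) :=
    hcont.tendsto.comp (tendsto_nhdsWithin_of_tendsto_nhds
      (by simpa using (continuous_const_add x).tendsto 0))
  have hsandwich : ∀ r > 0, leftDensity μ ν (x - r) ≤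
      ν (Metric.closedBall x r) / μ (Metric.closedBall x r) ∧
      ν (Metric.closedBall x r) / μ (Metric.closedBall x r) ≤ leftDensity μ ν (x + r) := by
    intro r hr
    have hpos : μ (Metric.closedBall x r) ≠ 0 :=
      ((Measure.mem_support_iff_forall x).1 hx _ (Metric.closedBall_mem_nhds x hr)).ne'
    have hmem := measure_Icc_mem_Icc_leftDensity_mul hTP hac (show x - r ≤ x + r by linarith)
    rw [Real.closedBall_eq_Icc] at hpos ⊢
    exact ⟨(ENNReal.le_div_iff_mul_le (Or.inl hpos) (Or.inl (measure_ne_top _ _))).2 hmem.1,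
      ENNReal.div_le_of_le_mul hmem.2⟩
  exact tendsto_of_tendsto_of_tendsto_of_le_of_le' hleft hright
    (eventually_nhdsWithin_of_forall fun r hr => (hsandwich r hr).1)
    (eventually_nhdsWithin_of_forall fun r hr => (hsandwich r hr).2)

lemma rnDeriv_ae_eq_leftDensity : ν.rnDeriv μ =ᵐ[μ] leftDensity μ ν := by
  have hdisc := (monotone_leftDensity hTP hac).countable_not_continuousAt
  filter_upwards [Besicovitch.ae_tendsto_rnDeriv ν μ, Measure.support_mem_ae,
    hdisc.ae_mem_imp_measure_singleton_ne_zero] with x hlim hsupp hcont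
  by_cases h0 : μ {x} = 0
  · exact tendsto_nhds_unique hlim
      (tendsto_ratio_closedBall_leftDensity hTP hac hsupp (not_not.1 (mt hcont (not_not.2 h0))))
  · rw [Measure.rnDeriv_eq_div_of_measure_singleton_ne_zero hac h0 (measure_ne_top _ _),
      leftDensity_eq_div_of_measure_singleton_pos hTP hac (pos_iff_ne_zero.2 h0)]

lemma withDensity_leftDensity : μ.withDensity (leftDensity μ ν) = ν := by
  rw [← withDensity_congr_ae (rnDeriv_ae_eq_leftDensity hTP hac),
    Measure.withDensity_rnDeriv_eq ν μ hac]

end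

theorem stmt_16 (μ ν : Measure ℝ) [IsFiniteMeasure μ] [IsFiniteMeasure ν]
    (hle : ν ≤ μ)
    (hTP : ∀ x y z : ℝ, x < y → y < z →
      μ (Ioc y z) * ν (Ioc x y) ≤ μ (Ioc x y) * ν (Ioc y z)) :
    let f : ℝ → ENNReal := fun x => ⨆ a ∈ Iio x, ν (Ioc a x) / μ (Ioc a x)
    (∀ x, f x ≤ 1) ∧ Monotone f ∧ Measurable f ∧
    (∀ B : Set ℝ, MeasurableSet B → ν B = ∫⁻ x in B, f x ∂μ) ∧
    (∀ x' x : ℝ, x' < x → μ (Ioc x' x) = 0 → f x' = f x) ∧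
    (∀ x : ℝ, (∀ a : ℝ, a < x → 0 < μ (Ioc a x)) →
      Tendsto (fun a => ν (Ioc a x) / μ (Ioc a x)) (nhdsWithin x (Iio x)) (nhds (f x))) ∧
    (∀ x : ℝ, 0 < μ {x} → f x = ν {x} / μ {x}) := by
  intro f
  have hac : ν ≪ μ := Measure.absolutelyContinuous_of_le hle
  have hmono : Monotone f := monotone_leftDensity hTP hac
  refine ⟨leftDensity_le_one hle, hmono, hmono.measurable, fun B hB => ?_,
    fun x' x h h0 => leftDensity_eq_of_measure_Ioc_eq_zero hac h h0,
    fun x hx => tendsto_ratio_leftDensity hTP hac hx,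
    fun x hx => leftDensity_eq_div_of_measure_singleton_pos hTP hac hx⟩
  rw [← withDensity_apply _ hB, show μ.withDensity f = ν from withDensity_leftDensity hTP hac]
end
end

section
/- Let Q1 and Q2 be probability measures on the real line with Q1 ≤_lr Q2. Let [a1,b1] and [a2,b2] be intervals in the extended real line [−∞,∞] with a1 ≤ a2, b1 ≤ b2, Q1([a1,b1] ∩ ℝ) > 0 and Q2([a2,b2] ∩ ℝ) > 0. Then the conditional distributions satisfy Q1(· | [a1,b1]) ≤_lr Q2(· | [a2,b2]), where Q_j(· | [a_j,b_j]) denotes the measure B ↦ Q_j(B ∩ [a_j,b_j])/Q_j([a_j,b_j]). -/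
open MeasureTheory Set Filter

noncomputable section

/-! Restricting `Q_j` to `C_j` multiplies its density by `(Q_j C_j)⁻¹ • 𝟙_{C_j}`. On the points
where the new ratio is neither `0` nor `∞`, namely `x ≤ y` with `x ∈ C2` charged by `g2` and
`y ∈ C1` charged by `g1`, the interval conditions `a1 ≤ a2`, `b1 ≤ b2` put both points in
`C1 ∩ C2`, so the new ratio there is the old one times the constant `(Q2 C2)⁻¹ * Q1 C1`. -/

open scoped ENNReal

def HasMonotoneRatio {α : Type*} [LE α] (g1 g2 : α → ℝ≥0∞) : Prop :=
  ∀ x y : α, x ≤ y → 0 < g1 x + g2 x → 0 < g1 y + g2 y → g2 x / g1 x ≤ g2 y / g1 y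

lemma ENNReal.mul_div_mul_le_mul_div_mul {c1 c2 a b a' b' : ℝ≥0∞} (hc1 : c1 ≠ 0)
    (hc1' : c1 ≠ ⊤) (h : a / b ≤ a' / b') : c2 * a / (c1 * b) ≤ c2 * a' / (c1 * b') := by
  have scale : ∀ u v : ℝ≥0∞, c2 * u / (c1 * v) = c2 * c1⁻¹ * (u / v) := fun u v => by
    rw [div_eq_mul_inv, div_eq_mul_inv, ENNReal.mul_inv (.inl hc1) (.inl hc1')]
    ring
  rw [scale, scale]
  gcongr

lemma HasMonotoneRatio.const_mul_indicator {α : Type*} [LE α] {g1 g2 : α → ℝ≥0∞}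
    (h : HasMonotoneRatio g1 g2) {c1 c2 : ℝ≥0∞} (hc1 : c1 ≠ 0) (hc1' : c1 ≠ ⊤)
    {C1 C2 : Set α} (hC : ∀ x ∈ C2, ∀ y ∈ C1, x ≤ y → x ∈ C1 ∧ y ∈ C2) :
    HasMonotoneRatio (fun x => c1 * C1.indicator g1 x) (fun x => c2 * C2.indicator g2 x) := by
  intro x y hxy hx hy
  rcases eq_or_ne (c1 * C1.indicator g1 y) 0 with hy1 | hy1
  · have hy2 : c2 * C2.indicator g2 y ≠ 0 := by simpa [hy1, pos_iff_ne_zero] using hy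
    simp only [hy1, ENNReal.div_zero hy2, le_top]
  rcases eq_or_ne (c2 * C2.indicator g2 x) 0 with hx2 | hx2
  · simp only [hx2, ENNReal.zero_div, zero_le]
  have hyC1 : y ∈ C1 := Set.mem_of_indicator_ne_zero (right_ne_zero_of_mul hy1)
  have hxC2 : x ∈ C2 := Set.mem_of_indicator_ne_zero (right_ne_zero_of_mul hx2)
  obtain ⟨hxC1, hyC2⟩ := hC x hxC2 y hyC1 hxy
  have hg1y : g1 y ≠ 0 := by simpa [Set.indicator_of_mem hyC1] using right_ne_zero_of_mul hy1
  have hg2x : g2 x ≠ 0 := by simpa [Set.indicator_of_mem hxC2] using right_ne_zero_of_mul hx2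
  simp only [Set.indicator_of_mem, hxC1, hxC2, hyC1, hyC2]
  exact ENNReal.mul_div_mul_le_mul_div_mul hc1 hc1' <|
    h x y hxy (by simp [pos_iff_ne_zero, hg2x]) (by simp [pos_iff_ne_zero, hg1y])

lemma IsDensity.cond {Q μ : Measure ℝ} {g : ℝ → ℝ≥0∞} (hg : IsDensity Q μ g)
    {C : Set ℝ} (hC : MeasurableSet C) :
    IsDensity (ProbabilityTheory.cond Q C) μ (fun x => (Q C)⁻¹ * C.indicator g x) := by
  refine ⟨(hg.1.indicator hC).const_mul _, fun B hB => ?_⟩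
  rw [ProbabilityTheory.cond_apply hC, lintegral_const_mul _ (hg.1.indicator hC),
    lintegral_indicator hC, Measure.restrict_restrict hC, hg.2 _ (hC.inter hB)]

lemma Set.mem_Icc_and_mem_Icc_of_le {β : Type*} [Preorder β] {a1 b1 a2 b2 x y : β}
    (ha : a1 ≤ a2) (hb : b1 ≤ b2) (hx : x ∈ Icc a2 b2) (hy : y ∈ Icc a1 b1) (hxy : x ≤ y) :
    x ∈ Icc a1 b1 ∧ y ∈ Icc a2 b2 :=
  ⟨⟨ha.trans hx.1, hxy.trans hy.2⟩, ⟨hx.1.trans hxy, hy.2.trans hb⟩⟩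

theorem stmt_17_general (Q1 Q2 : Measure ℝ) [IsProbabilityMeasure Q1]
    (hlr : LikelihoodRatioLE Q1 Q2)
    (a1 b1 a2 b2 : EReal) (ha : a1 ≤ a2) (hb : b1 ≤ b2)
    (h1 : 0 < Q1 {x : ℝ | a1 ≤ (x : EReal) ∧ (x : EReal) ≤ b1}) :
    LikelihoodRatioLE
      (ProbabilityTheory.cond Q1 {x : ℝ | a1 ≤ (x : EReal) ∧ (x : EReal) ≤ b1})
      (ProbabilityTheory.cond Q2 {x : ℝ | a2 ≤ (x : EReal) ∧ (x : EReal) ≤ b2}) := by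
  obtain ⟨μ, g1, g2, hμ, hg1, hg2, hmono⟩ := hlr
  have hmeas : ∀ a b : EReal, MeasurableSet {x : ℝ | a ≤ (x : EReal) ∧ (x : EReal) ≤ b} :=
    fun a b => measurableSet_Icc.preimage measurable_coe_real_ereal
  refine ⟨μ, _, _, hμ, hg1.cond (hmeas a1 b1), hg2.cond (hmeas a2 b2),
    HasMonotoneRatio.const_mul_indicator hmono (ENNReal.inv_ne_zero.2 (measure_ne_top _ _))
      (ENNReal.inv_ne_top.2 h1.ne') ?_⟩
  exact fun x hx y hy hxy =>
    Set.mem_Icc_and_mem_Icc_of_le ha hb hx hy (EReal.coe_le_coe_iff.2 hxy)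

theorem stmt_17 (Q1 Q2 : Measure ℝ) [IsProbabilityMeasure Q1] [IsProbabilityMeasure Q2]
    (hlr : LikelihoodRatioLE Q1 Q2)
    (a1 b1 a2 b2 : EReal) (ha : a1 ≤ a2) (hb : b1 ≤ b2)
    (h1 : 0 < Q1 {x : ℝ | a1 ≤ (x : EReal) ∧ (x : EReal) ≤ b1})
    (h2 : 0 < Q2 {x : ℝ | a2 ≤ (x : EReal) ∧ (x : EReal) ≤ b2}) :
    LikelihoodRatioLE
      (ProbabilityTheory.cond Q1 {x : ℝ | a1 ≤ (x : EReal) ∧ (x : EReal) ≤ b1})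
      (ProbabilityTheory.cond Q2 {x : ℝ | a2 ≤ (x : EReal) ∧ (x : EReal) ≤ b2}) :=
  stmt_17_general Q1 Q2 hlr a1 b1 a2 b2 ha hb h1
end
end
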